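/- arXiv:2001.05420 — 9 statements merged into one kernel-verified Lean document; each statement's English description precedes it below -/
import Mathlib

section
/- Fisher–Tippett theorem: Let F be a distribution function and suppose there exist constants aₙ > 0, bₙ ∈ ℝ and a distribution function G that is nondegenerate (there exists x with 0 < G(x) < 1) such that F(aₙx + bₙ)ⁿ → G(x) as n → ∞ at every continuity point x of G. Then there exist μ ∈ ℝ and σ > 0 such that exactly one of the following holds for all x ∈ ℝ: (i) there is α > 0 with G(x) = Φ_α((x − μ)/σ); (ii) there is α > 0 with G(x) = Ψ_α((x − μ)/σ); (iii) G(x) = Λ((x − μ)/σ). -/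
/-!
Replacing `n` by `⌈n / t⌉` in `F (aₙ x + bₙ) ^ n → G x` and invoking the convergence-of-types
theorem shows that `G` is max-stable: for every `t > 0` there is an affine map with
`G (A t * x + B t) = G x ^ t`. A nondegenerate distribution function has no affine symmetry
other than the identity, so `A` and `B` are unique, hence `A (s * t) = A s * A t` and
`B (s * t) = A t * B s + B t`. Being locally bounded, `A t = t ^ ρ`. If `ρ ≠ 0`, then after a
shift `G (t ^ ρ * u) = G u ^ t`, which forces the Fréchet (`ρ < 0`) or Weibull (`ρ > 0`) form;
if `ρ = 0`, then `B t = -σ * log t` and `G (x - σ * log t) = G x ^ t` forces the Gumbel form.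
The three types are mutually exclusive because they take the values `0`, `1` and `e⁻¹` at
their location parameter.
-/

open Filter Topology

/-- A (cumulative) distribution function on ℝ: nondecreasing, right-continuous,
with limits 0 at -∞ and 1 at +∞. -/
def IsDistFun (F : ℝ → ℝ) : Prop :=
  Monotone F ∧ (∀ x, ContinuousWithinAt F (Set.Ici x) x) ∧
    Tendsto F atBot (𝓝 0) ∧ Tendsto F atTop (𝓝 1)

/-- The Fréchet law `Φ_α`. -/
noncomputable def frechet (α : ℝ) (x : ℝ) : ℝ :=
  if 0 < x then Real.exp (-(x ^ (-α))) else 0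

/-- The Weibull law `Ψ_α`. -/
noncomputable def weibull (α : ℝ) (x : ℝ) : ℝ :=
  if x < 0 then Real.exp (-((-x) ^ α)) else 1

/-- The Gumbel law `Λ`. -/
noncomputable def gumbel (x : ℝ) : ℝ :=
  Real.exp (-Real.exp (-x))

open Set

namespace IsDistFun

variable {G : ℝ → ℝ}

lemma mono (hG : IsDistFun G) : Monotone G := hG.1

lemma continuousWithinAt_Ici (hG : IsDistFun G) (x : ℝ) : ContinuousWithinAt G (Ici x) x :=
  hG.2.1 x

lemma tendsto_atBot (hG : IsDistFun G) : Tendsto G atBot (𝓝 0) := hG.2.2.1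

lemma tendsto_atTop (hG : IsDistFun G) : Tendsto G atTop (𝓝 1) := hG.2.2.2

lemma nonneg (hG : IsDistFun G) (x : ℝ) : 0 ≤ G x :=
  le_of_tendsto hG.tendsto_atBot (eventually_atBot.2 ⟨x, fun _ hy => hG.mono hy⟩)

lemma le_one (hG : IsDistFun G) (x : ℝ) : G x ≤ 1 :=
  ge_of_tendsto hG.tendsto_atTop (eventually_atTop.2 ⟨x, fun _ hy => hG.mono hy⟩)

lemma comp_affine (hG : IsDistFun G) {A : ℝ} (hA : 0 < A) (B : ℝ) :
    IsDistFun (fun x => G (A * x + B)) := by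
  refine ⟨fun x y hxy => hG.mono (by gcongr), fun x => ?_, ?_, ?_⟩
  · refine (hG.continuousWithinAt_Ici _).comp (by fun_prop : Continuous _).continuousWithinAt ?_
    intro y (hy : x ≤ y)
    show A * x + B ≤ A * y + B
    gcongr
  · exact hG.tendsto_atBot.comp (tendsto_atBot_add_const_right _ B (tendsto_id.const_mul_atBot hA))
  · exact hG.tendsto_atTop.comp (tendsto_atTop_add_const_right _ B (tendsto_id.const_mul_atTop hA))

lemma comp_add_const (hG : IsDistFun G) (μ : ℝ) : IsDistFun (fun x => G (x + μ)) := by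
  simpa using hG.comp_affine one_pos μ

lemma rpow (hG : IsDistFun G) {s : ℝ} (hs : 0 < s) : IsDistFun (fun x => G x ^ s) := by
  have hcont : ∀ y, ContinuousAt (· ^ s) y := fun y =>
    Real.continuousAt_rpow_const y s (Or.inr hs.le)
  refine ⟨fun x y hxy => Real.rpow_le_rpow (hG.nonneg x) (hG.mono hxy) hs.le,
    fun x => (hcont _).comp_continuousWithinAt (hG.continuousWithinAt_Ici x), ?_, ?_⟩
  · simpa [Function.comp_def, Real.zero_rpow hs.ne'] using (hcont 0).tendsto.comp hG.tendsto_atBot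
  · simpa [Function.comp_def] using (hcont 1).tendsto.comp hG.tendsto_atTop

lemma eq_zero_of_tendsto_atBot (hG : IsDistFun G) {y : ℕ → ℝ} (hy : Tendsto y atTop atBot)
    {c : ℝ} (hc : ∀ n, G (y n) = c) : c = 0 := by
  simpa [Function.comp_def, hc] using hG.tendsto_atBot.comp hy

lemma eq_one_of_tendsto_atTop (hG : IsDistFun G) {y : ℕ → ℝ} (hy : Tendsto y atTop atTop)
    {c : ℝ} (hc : ∀ n, G (y n) = c) : c = 1 := by
  simpa [Function.comp_def, hc] using hG.tendsto_atTop.comp hy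

end IsDistFun

lemma Monotone.dense_continuousAt {f : ℝ → ℝ} (hf : Monotone f) :
    Dense {x | ContinuousAt f x} := by
  simpa [compl_ofPred] using hf.countable_not_continuousAt.dense_compl ℝ

lemma eq_of_eqOn_dense {G H : ℝ → ℝ} {S : Set ℝ} (hS : Dense S)
    (hG : ∀ x, ContinuousWithinAt G (Ici x) x) (hH : ∀ x, ContinuousWithinAt H (Ici x) x)
    (hGH : EqOn G H S) : G = H := by
  funext x
  have hx : x ∈ closure (Ioi x ∩ S) :=
    closure_minimal (hS.open_subset_closure_inter isOpen_Ioi) isClosed_closure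
      (by simp : x ∈ closure (Ioi x))
  have := mem_closure_iff_nhdsWithin_neBot.1 hx
  have hle : 𝓝[Ioi x ∩ S] x ≤ 𝓝[Ici x] x :=
    nhdsWithin_mono _ (inter_subset_left.trans Ioi_subset_Ici_self)
  have heq : G =ᶠ[𝓝[Ioi x ∩ S] x] H := eventually_nhdsWithin_of_forall fun y hy => hGH hy.2
  exact tendsto_nhds_unique (((hG x).tendsto.mono_left hle).congr' heq)
    ((hH x).tendsto.mono_left hle)

lemma tendsto_apply_of_tendsto_of_continuousAt {Gn : ℕ → ℝ → ℝ} {G : ℝ → ℝ}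
    (hmono : ∀ n, Monotone (Gn n)) (hG : Monotone G)
    (hconv : ∀ x, ContinuousAt G x → Tendsto (fun n => Gn n x) atTop (𝓝 (G x)))
    {t : ℝ} (ht : ContinuousAt G t) {x : ℕ → ℝ} (hx : Tendsto x atTop (𝓝 t)) :
    Tendsto (fun n => Gn n (x n)) atTop (𝓝 (G t)) := by
  refine tendsto_order.2 ⟨fun a ha => ?_, fun a ha => ?_⟩
  · obtain ⟨l, u, hlu, hsub⟩ :=
      mem_nhds_iff_exists_Ioo_subset.1 (ht.eventually (lt_mem_nhds ha))
    obtain ⟨p, hpc, hp⟩ := hG.dense_continuousAt.exists_between hlu.1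
    filter_upwards [hx.eventually (lt_mem_nhds hp.2),
      (hconv p hpc).eventually (lt_mem_nhds (hsub ⟨hp.1, hp.2.trans hlu.2⟩))] with n hpn han
    exact han.trans_le (hmono n hpn.le)
  · obtain ⟨l, u, hlu, hsub⟩ :=
      mem_nhds_iff_exists_Ioo_subset.1 (ht.eventually (gt_mem_nhds ha))
    obtain ⟨p, hpc, hp⟩ := hG.dense_continuousAt.exists_between hlu.2
    filter_upwards [hx.eventually (gt_mem_nhds hp.1),
      (hconv p hpc).eventually (gt_mem_nhds (hsub ⟨hlu.1.trans hp.1, hp.2⟩))] with n hpn han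
    exact (hmono n hpn.le).trans_lt han

namespace IsDistFun

variable {G : ℝ → ℝ}

lemma exists_continuousAt_mem_Ioo (hG : IsDistFun G) (hnd : ∃ x, 0 < G x ∧ G x < 1) :
    ∃ z₁ z₂, z₁ < z₂ ∧ ContinuousAt G z₁ ∧ ContinuousAt G z₂ ∧
      G z₁ ∈ Ioo 0 1 ∧ G z₂ ∈ Ioo 0 1 := by
  obtain ⟨x₀, hx₀⟩ := hnd
  obtain ⟨u, hu, hsub⟩ := mem_nhdsGE_iff_exists_Ico_subset.1
    ((hG.continuousWithinAt_Ici x₀).eventually (gt_mem_nhds hx₀.2))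
  obtain ⟨z₂, hz₂c, hz₂⟩ := hG.mono.dense_continuousAt.exists_between hu
  obtain ⟨z₁, hz₁c, hz₁⟩ := hG.mono.dense_continuousAt.exists_between hz₂.1
  have hmem : ∀ z ∈ Ioo x₀ u, G z ∈ Ioo 0 1 := fun z hz =>
    ⟨hx₀.1.trans_le (hG.mono hz.1.le), hsub ⟨hz.1.le, hz.2⟩⟩
  exact ⟨z₁, z₂, hz₁.2, hz₁c, hz₂c, hmem z₁ ⟨hz₁.1, hz₁.2.trans hz₂.2⟩, hmem z₂ hz₂⟩

lemma exists_eventually_mem_Icc (hG : IsDistFun G) {Gn : ℕ → ℝ → ℝ}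
    (hmono : ∀ n, Monotone (Gn n))
    (hconv : ∀ x, ContinuousAt G x → Tendsto (fun n => Gn n x) atTop (𝓝 (G x)))
    {x : ℕ → ℝ} {y : ℝ} (hx : Tendsto (fun n => Gn n (x n)) atTop (𝓝 y)) (hy : y ∈ Ioo 0 1) :
    ∃ u v, ∀ᶠ n in atTop, x n ∈ Icc u v := by
  obtain ⟨u₀, hu₀⟩ := eventually_atBot.1 (hG.tendsto_atBot.eventually (gt_mem_nhds hy.1))
  obtain ⟨u, hu, hul⟩ := hG.mono.dense_continuousAt.exists_lt u₀
  obtain ⟨v₀, hv₀⟩ := eventually_atTop.1 (hG.tendsto_atTop.eventually (lt_mem_nhds hy.2))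
  obtain ⟨v, hv, hvg⟩ := hG.mono.dense_continuousAt.exists_gt v₀
  refine ⟨u, v, ?_⟩
  filter_upwards [(hconv u hu).eventually_lt hx (hu₀ u hul.le),
    hx.eventually_lt (hconv v hv) (hv₀ v hvg.le)] with n hlo hhi
  exact ⟨((hmono n).reflect_lt hlo).le, ((hmono n).reflect_lt hhi).le⟩

end IsDistFun

section ConvergenceOfTypes

variable {G H : ℝ → ℝ} {Gn : ℕ → ℝ → ℝ} {c d : ℕ → ℝ}

lemma exists_eventually_le_of_tendsto_affine (hG : IsDistFun G) (hH : IsDistFun H)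
    (hHnd : ∃ x, 0 < H x ∧ H x < 1) (hmono : ∀ n, Monotone (Gn n)) (hc : ∀ n, 0 < c n)
    (hG_lim : ∀ x, ContinuousAt G x → Tendsto (fun n => Gn n x) atTop (𝓝 (G x)))
    (hH_lim : ∀ x, ContinuousAt H x →
      Tendsto (fun n => Gn n (c n * x + d n)) atTop (𝓝 (H x))) :
    ∃ U, ∀ᶠ n in atTop, c n ≤ U ∧ |d n| ≤ U := by
  obtain ⟨z₁, z₂, hz, hz₁c, hz₂c, hz₁, hz₂⟩ := hH.exists_continuousAt_mem_Ioo hHnd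
  obtain ⟨u₁, v₁, h₁⟩ := hG.exists_eventually_mem_Icc hmono hG_lim (hH_lim z₁ hz₁c) hz₁
  obtain ⟨u₂, v₂, h₂⟩ := hG.exists_eventually_mem_Icc hmono hG_lim (hH_lim z₂ hz₂c) hz₂
  set K := (v₂ - u₁) / (z₂ - z₁)
  refine ⟨max K (max |u₁| |v₁| + K * |z₁|), ?_⟩
  filter_upwards [h₁, h₂] with n hn₁ hn₂
  have hcK : c n ≤ K := by
    rw [le_div_iff₀ (sub_pos.2 hz)]
    nlinarith [hn₁.1, hn₂.2]
  refine ⟨le_max_of_le_left hcK, le_max_of_le_right ?_⟩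
  calc |d n| = |(c n * z₁ + d n) - c n * z₁| := by ring_nf
    _ ≤ |c n * z₁ + d n| + |c n * z₁| := abs_sub _ _
    _ ≤ max |u₁| |v₁| + K * |z₁| := by
      rw [abs_mul, abs_of_pos (hc n)]
      gcongr
      exact abs_le_max_abs_abs hn₁.1 hn₁.2

lemma exists_eventually_ge_of_tendsto_affine (hG : IsDistFun G) (hH : IsDistFun H)
    (hGnd : ∃ x, 0 < G x ∧ G x < 1) (hmono : ∀ n, Monotone (Gn n)) (hc : ∀ n, 0 < c n)
    (hG_lim : ∀ x, ContinuousAt G x → Tendsto (fun n => Gn n x) atTop (𝓝 (G x)))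
    (hH_lim : ∀ x, ContinuousAt H x →
      Tendsto (fun n => Gn n (c n * x + d n)) atTop (𝓝 (H x))) :
    ∃ l > 0, ∀ᶠ n in atTop, l ≤ c n := by
  -- the upper bound, applied to the inverse affine maps, which carry `H` back to `G`
  have hmono' : ∀ n, Monotone fun y => Gn n (c n * y + d n) := fun n x y hxy =>
    hmono n (by gcongr; exact (hc n).le)
  have hG_lim' : ∀ x, ContinuousAt G x →
      Tendsto (fun n => Gn n (c n * ((c n)⁻¹ * x + -d n / c n) + d n)) atTop (𝓝 (G x)) := by
    intro x hx
    convert hG_lim x hx using 3 with n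
    field_simp [(hc n).ne']
    ring
  obtain ⟨U, hU⟩ := exists_eventually_le_of_tendsto_affine hH hG hGnd hmono'
    (fun n => inv_pos.2 (hc n)) hH_lim hG_lim'
  have hUpos : 0 < U := by
    obtain ⟨n, hn⟩ := hU.exists
    exact (inv_pos.2 (hc n)).trans_le hn.1
  exact ⟨U⁻¹, inv_pos.2 hUpos, hU.mono fun n hn => (inv_le_comm₀ (hc n) hUpos).1 hn.1⟩

lemma eq_comp_affine_of_tendsto (hG : IsDistFun G) (hH : IsDistFun H)
    (hmono : ∀ n, Monotone (Gn n))
    (hG_lim : ∀ x, ContinuousAt G x → Tendsto (fun n => Gn n x) atTop (𝓝 (G x)))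
    (hH_lim : ∀ x, ContinuousAt H x →
      Tendsto (fun n => Gn n (c n * x + d n)) atTop (𝓝 (H x)))
    {A B : ℝ} (hA : 0 < A) (hcA : Tendsto c atTop (𝓝 A)) (hdB : Tendsto d atTop (𝓝 B)) :
    H = fun x => G (A * x + B) := by
  have hinj : Function.Injective fun x => A * x + B := fun x y hxy => by
    simpa [hA.ne'] using hxy
  have hS : Dense {x | ContinuousAt H x ∧ ContinuousAt G (A * x + B)} :=
    ((hH.mono.countable_not_continuousAt.union
      (hG.mono.countable_not_continuousAt.preimage hinj)).dense_compl ℝ).mono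
      fun x hx => by simpa [not_or] using hx
  refine eq_of_eqOn_dense hS hH.continuousWithinAt_Ici
    (hG.comp_affine hA B).continuousWithinAt_Ici fun x hx => ?_
  exact tendsto_nhds_unique (hH_lim x hx.1) (tendsto_apply_of_tendsto_of_continuousAt hmono
    hG.mono hG_lim hx.2 ((hcA.mul_const x).add hdB))

theorem exists_eq_comp_affine_of_tendsto (hG : IsDistFun G) (hH : IsDistFun H)
    (hGnd : ∃ x, 0 < G x ∧ G x < 1) (hHnd : ∃ x, 0 < H x ∧ H x < 1)
    (hmono : ∀ n, Monotone (Gn n)) (hc : ∀ n, 0 < c n)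
    (hG_lim : ∀ x, ContinuousAt G x → Tendsto (fun n => Gn n x) atTop (𝓝 (G x)))
    (hH_lim : ∀ x, ContinuousAt H x →
      Tendsto (fun n => Gn n (c n * x + d n)) atTop (𝓝 (H x))) :
    ∃ A B, 0 < A ∧ H = fun x => G (A * x + B) := by
  obtain ⟨U, hU⟩ := exists_eventually_le_of_tendsto_affine hG hH hHnd hmono hc hG_lim hH_lim
  obtain ⟨l, hl, hlc⟩ :=
    exists_eventually_ge_of_tendsto_affine hG hH hGnd hmono hc hG_lim hH_lim
  have hK : ∀ᶠ n in atTop, (c n, d n) ∈ Icc l U ×ˢ Icc (-U) U := by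
    filter_upwards [hU, hlc] with n h₁ h₂
    exact ⟨⟨h₂, h₁.1⟩, abs_le.1 h₁.2⟩
  obtain ⟨⟨A, B⟩, hAB, φ, hφ, hlim⟩ :=
    (isCompact_Icc.prod isCompact_Icc).tendsto_subseq' hK.frequently
  have hA : 0 < A := hl.trans_le hAB.1.1
  exact ⟨A, B, hA, eq_comp_affine_of_tendsto hG hH (fun n => hmono (φ n))
    (fun x hx => (hG_lim x hx).comp hφ.tendsto_atTop)
    (fun x hx => (hH_lim x hx).comp hφ.tendsto_atTop) hA
    ((continuous_fst.tendsto _).comp hlim) ((continuous_snd.tendsto _).comp hlim)⟩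

end ConvergenceOfTypes

lemma tendsto_pow_natCeil_mul {u : ℕ → ℝ} {g s : ℝ} (hu : ∀ n, 0 ≤ u n) (hs : 0 < s)
    (h : Tendsto (fun n => u n ^ n) atTop (𝓝 g)) :
    Tendsto (fun n => u n ^ ⌈s * n⌉₊) atTop (𝓝 (g ^ s)) := by
  have hratio : Tendsto (fun n : ℕ => (⌈s * n⌉₊ : ℝ) / n) atTop (𝓝 s) :=
    (tendsto_nat_ceil_mul_div_atTop hs.le).comp tendsto_natCast_atTop_atTop
  refine ((Real.continuousAt_rpow (g, s) (Or.inr hs)).tendsto.comp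
    (h.prodMk_nhds hratio)).congr' ?_
  filter_upwards [eventually_ne_atTop 0] with n hn
  simp only [Function.comp, ← Real.rpow_natCast, ← Real.rpow_mul (hu n)]
  congr 1
  field_simp

theorem exists_comp_affine_eq_rpow_of_tendsto {F G : ℝ → ℝ} (hF : IsDistFun F)
    (hG : IsDistFun G) (hnd : ∃ x, 0 < G x ∧ G x < 1) {a b : ℕ → ℝ} (ha : ∀ n, 0 < a n)
    (hconv : ∀ x, ContinuousAt G x → Tendsto (fun n => F (a n * x + b n) ^ n) atTop (𝓝 (G x)))
    {t : ℝ} (ht : 0 < t) :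
    ∃ A B, 0 < A ∧ ∀ x, G (A * x + B) = G x ^ t := by
  set s := t⁻¹
  have hs : 0 < s := inv_pos.2 ht
  set m : ℕ → ℕ := fun n => ⌈s * n⌉₊
  have hm : Tendsto m atTop atTop :=
    tendsto_natCast_atTop_iff.1 <| tendsto_atTop_mono (fun n => Nat.le_ceil _)
      (tendsto_natCast_atTop_atTop.const_mul_atTop hs)
  have hmono : ∀ n, Monotone fun x => F (a n * x + b n) ^ m n := fun n x y hxy =>
    pow_le_pow_left₀ (hF.nonneg _) (hF.mono (by gcongr; exact (ha n).le)) _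
  have hGs_lim : ∀ x, ContinuousAt (fun x => G x ^ s) x →
      Tendsto (fun n => F (a n * x + b n) ^ m n) atTop (𝓝 (G x ^ s)) := by
    intro x hx
    have hGx : ContinuousAt G x := by
      have : ContinuousAt (fun x => (G x ^ s) ^ t) x :=
        (Real.continuousAt_rpow_const _ t (Or.inr ht.le)).comp hx
      refine this.congr (Eventually.of_forall fun y => ?_)
      simp [← Real.rpow_mul (hG.nonneg y), s, inv_mul_cancel₀ ht.ne']
    exact tendsto_pow_natCeil_mul (fun n => hF.nonneg _) hs (hconv x hGx)
  have hG_lim : ∀ x, ContinuousAt G x →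
      Tendsto (fun n => F (a n * (a (m n) / a n * x + (b (m n) - b n) / a n) + b n) ^ m n)
        atTop (𝓝 (G x)) := by
    intro x hx
    refine ((hconv x hx).comp hm).congr fun n => ?_
    simp only [Function.comp]
    congr 2
    field_simp [(ha n).ne']
    ring
  obtain ⟨x₀, hx₀⟩ := hnd
  have hGs_nd : ∃ x, 0 < G x ^ s ∧ G x ^ s < 1 :=
    ⟨x₀, Real.rpow_pos_of_pos hx₀.1 s, Real.rpow_lt_one (hG.nonneg x₀) hx₀.2 hs⟩
  obtain ⟨A, B, hA, hAB⟩ := exists_eq_comp_affine_of_tendsto (hG.rpow hs) hG hGs_nd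
    ⟨x₀, hx₀⟩ hmono (fun n => div_pos (ha _) (ha n)) hGs_lim hG_lim
  refine ⟨A, B, hA, fun x => ?_⟩
  rw [congrFun hAB x, ← Real.rpow_mul (hG.nonneg _), inv_mul_cancel₀ ht.ne', Real.rpow_one]

namespace IsDistFun

variable {G : ℝ → ℝ}

lemma false_of_comp_affine_eq_of_one_lt (hG : IsDistFun G) (hnd : ∃ x, 0 < G x ∧ G x < 1)
    {p q : ℝ} (hp : 1 < p) (hinv : ∀ x, G (p * x + q) = G x) : False := by
  -- iterating the expanding map `x ↦ p * x + q` pushes every point but its fixed point `x₀`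
  -- to `±∞`, so `G` only takes the values `0` and `1` off `x₀`
  set x₀ := q / (1 - p)
  have hfix : p * x₀ + q = x₀ := by
    simp only [x₀]
    field_simp [(sub_neg.2 hp).ne]
    ring
  have hiter : ∀ (n : ℕ) x, G (p ^ n * (x - x₀) + x₀) = G x := by
    intro n
    induction n with
    | zero => simp
    | succ k ih =>
      intro x
      rw [← ih x, ← hinv (p ^ k * (x - x₀) + x₀)]
      congr 1
      linear_combination -hfix
  have hpow := tendsto_pow_atTop_atTop_of_one_lt hp
  have hright : ∀ x, x₀ < x → G x = 1 := fun x hx => hG.eq_one_of_tendsto_atTop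
    (tendsto_atTop_add_const_right _ _ (hpow.atTop_mul_const (sub_pos.2 hx))) (hiter · x)
  have hleft : ∀ x, x < x₀ → G x = 0 := fun x hx => hG.eq_zero_of_tendsto_atBot
    (tendsto_atBot_add_const_right _ _ (hpow.atTop_mul_const_of_neg (sub_neg.2 hx))) (hiter · x)
  have hx₀ : G x₀ = 1 := tendsto_nhds_unique
    ((hG.continuousWithinAt_Ici x₀).tendsto.mono_left (nhdsWithin_mono _ Ioi_subset_Ici_self))
    (tendsto_const_nhds.congr' (eventually_nhdsWithin_of_forall fun x hx => (hright x hx).symm))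
  obtain ⟨x, hx⟩ := hnd
  rcases lt_trichotomy x x₀ with h | rfl | h
  · linarith [hleft x h]
  · linarith
  · linarith [hright x h]

lemma eq_of_comp_affine_eq_self (hG : IsDistFun G) (hnd : ∃ x, 0 < G x ∧ G x < 1)
    {p q : ℝ} (hp : 0 < p) (hinv : ∀ x, G (p * x + q) = G x) : p = 1 ∧ q = 0 := by
  rcases lt_trichotomy p 1 with h | rfl | h
  · refine (hG.false_of_comp_affine_eq_of_one_lt hnd ((one_lt_inv₀ hp).2 h)
      (q := -q / p) fun x => ?_).elim
    have := hinv (p⁻¹ * x + -q / p)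
    rw [show p * (p⁻¹ * x + -q / p) + q = x by field_simp; ring] at this
    exact this.symm
  · refine ⟨rfl, ?_⟩
    have hiter : ∀ (n : ℕ) x, G (n * q + x) = G x := by
      intro n
      induction n with
      | zero => simp
      | succ k ih => intro x; rw [← ih x, ← hinv (k * q + x)]; push_cast; ring_nf
    obtain ⟨x, hx⟩ := hnd
    rcases lt_trichotomy q 0 with hq | hq | hq
    · linarith [hG.eq_zero_of_tendsto_atBot (tendsto_atBot_add_const_right _ x
        (tendsto_natCast_atTop_atTop.atTop_mul_const_of_neg hq)) (hiter · x)]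
    · exact hq
    · linarith [hG.eq_one_of_tendsto_atTop (tendsto_atTop_add_const_right _ x
        (tendsto_natCast_atTop_atTop.atTop_mul_const hq)) (hiter · x)]
  · exact (hG.false_of_comp_affine_eq_of_one_lt hnd h hinv).elim

lemma eq_of_comp_affine_eq (hG : IsDistFun G) (hnd : ∃ x, 0 < G x ∧ G x < 1)
    {p q r s : ℝ} (hp : 0 < p) (hr : 0 < r) (h : ∀ x, G (p * x + q) = G (r * x + s)) :
    p = r ∧ q = s := by
  have hinv : ∀ x, G (p / r * x + (q - p * s / r)) = G x := fun x => by
    have := h ((x - s) / r)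
    rwa [show r * ((x - s) / r) + s = x by field_simp; ring,
      show p * ((x - s) / r) + q = p / r * x + (q - p * s / r) by ring] at this
  obtain ⟨h₁, h₂⟩ := hG.eq_of_comp_affine_eq_self hnd (div_pos hp hr) hinv
  rw [div_eq_one_iff_eq hr.ne'] at h₁
  subst h₁
  exact ⟨rfl, by field_simp at h₂; linarith⟩

end IsDistFun

theorem AddMonoidHom.eq_mul_of_bddAbove (f : ℝ →+ ℝ) {c : ℝ} (hc : 0 < c)
    (hf : BddAbove (f '' Icc 0 c)) (x : ℝ) : f x = x * f 1 := by
  obtain ⟨M, hM⟩ := hf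
  have hup : ∀ y ∈ Icc (-c) c, f y ≤ max M (M - f c) := by
    intro y hy
    rcases le_total 0 y with h | h
    · exact le_max_of_le_left (hM ⟨y, ⟨h, hy.2⟩, rfl⟩)
    · have h₁ := hM ⟨y + c, ⟨by linarith [hy.1], by linarith⟩, rfl⟩
      have h₂ : f (y + c) = f y + f c := map_add f y c
      exact le_max_of_le_right (by linarith)
  have hbdd : Bornology.IsBounded (f '' Icc (-c) c) := by
    refine isBounded_iff_forall_norm_le.2 ⟨max M (M - f c), ?_⟩
    rintro _ ⟨y, hy, rfl⟩
    have := hup (-y) ⟨by linarith [hy.2], by linarith [hy.1]⟩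
    rw [map_neg] at this
    exact abs_le.2 ⟨by linarith, hup y hy⟩
  have hcont := f.continuous_of_isBounded_nhds_zero (Icc_mem_nhds (neg_neg_of_pos hc) hc) hbdd
  simpa using map_real_smul f hcont x 1

def IsMaxStableWith (G A B : ℝ → ℝ) : Prop :=
  ∀ t, 0 < t → 0 < A t ∧ ∀ x, G (A t * x + B t) = G x ^ t

theorem exists_isMaxStableWith_of_tendsto {F G : ℝ → ℝ} (hF : IsDistFun F)
    (hG : IsDistFun G) (hnd : ∃ x, 0 < G x ∧ G x < 1) {a b : ℕ → ℝ} (ha : ∀ n, 0 < a n)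
    (hconv : ∀ x, ContinuousAt G x → Tendsto (fun n => F (a n * x + b n) ^ n) atTop (𝓝 (G x))) :
    ∃ A B, IsMaxStableWith G A B := by
  choose! A B hAB using fun t (ht : 0 < t) =>
    exists_comp_affine_eq_rpow_of_tendsto hF hG hnd ha hconv ht
  exact ⟨A, B, hAB⟩

namespace IsMaxStableWith

variable {G A B : ℝ → ℝ}

lemma map_mul (h : IsMaxStableWith G A B) (hG : IsDistFun G) (hnd : ∃ x, 0 < G x ∧ G x < 1)
    {s u : ℝ} (hs : 0 < s) (hu : 0 < u) :
    A (s * u) = A s * A u ∧ B (s * u) = A u * B s + B u := by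
  have hcomp : ∀ x, G (A (s * u) * x + B (s * u)) = G (A u * A s * x + (A u * B s + B u)) := by
    intro x
    rw [(h _ (mul_pos hs hu)).2, show A u * A s * x + (A u * B s + B u) =
      A u * (A s * x + B s) + B u by ring, (h u hu).2, (h s hs).2,
      ← Real.rpow_mul (hG.nonneg x)]
  obtain ⟨hA, hB⟩ := hG.eq_of_comp_affine_eq hnd (h _ (mul_pos hs hu)).1
    (mul_pos (h u hu).1 (h s hs).1) hcomp
  exact ⟨hA.trans (mul_comm _ _), hB⟩

lemma strictAntiOn (h : IsMaxStableWith G A B) (hG : Monotone G) {z : ℝ} (hz : G z ∈ Ioo 0 1) :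
    StrictAntiOn (fun t => A t * z + B t) (Ioi 0) := by
  intro s hs u hu hsu
  refine hG.reflect_lt ?_
  rw [(h u hu).2, (h s hs).2]
  exact Real.rpow_lt_rpow_of_exponent_gt hz.1 hz.2 hsu

lemma exists_rpow (h : IsMaxStableWith G A B) (hG : IsDistFun G)
    (hnd : ∃ x, 0 < G x ∧ G x < 1) : ∃ ρ : ℝ, ∀ t, 0 < t → A t = t ^ ρ := by
  obtain ⟨z₁, z₂, hz, -, -, hz₁, hz₂⟩ := hG.exists_continuousAt_mem_Ioo hnd
  let f : ℝ →+ ℝ := AddMonoidHom.mk' (fun u => Real.log (A (Real.exp u))) fun u v => by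
    simp only [Real.exp_add, (h.map_mul hG hnd (Real.exp_pos u) (Real.exp_pos v)).1]
    exact Real.log_mul (h _ (Real.exp_pos u)).1.ne' (h _ (Real.exp_pos v)).1.ne'
  set M := ((A 1 * z₂ + B 1) - (A (Real.exp 1) * z₁ + B (Real.exp 1))) / (z₂ - z₁)
  have hA_le : ∀ t ∈ Icc 1 (Real.exp 1), A t ≤ M := by
    intro t ht
    have ht0 : (0 : ℝ) < t := one_pos.trans_le ht.1
    have h₂ := (h.strictAntiOn hG.mono hz₂).antitoneOn (mem_Ioi.2 one_pos) (mem_Ioi.2 ht0) ht.1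
    have h₁ := (h.strictAntiOn hG.mono hz₁).antitoneOn (mem_Ioi.2 ht0)
      (mem_Ioi.2 (Real.exp_pos 1)) ht.2
    rw [le_div_iff₀ (sub_pos.2 hz)]
    linarith
  have hbdd : BddAbove (f '' Icc 0 1) := by
    refine ⟨Real.log M, ?_⟩
    rintro _ ⟨u, hu, rfl⟩
    exact Real.log_le_log (h _ (Real.exp_pos u)).1
      (hA_le _ ⟨Real.one_le_exp hu.1, Real.exp_le_exp.2 hu.2⟩)
  refine ⟨Real.log (A (Real.exp 1)), fun t ht => ?_⟩
  have hf := f.eq_mul_of_bddAbove one_pos hbdd (Real.log t)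
  simp only [f, AddMonoidHom.mk'_apply, Real.exp_log ht] at hf
  rw [Real.rpow_def_of_pos ht, ← hf, Real.exp_log (h t ht).1]

lemma exists_comp_rpow_eq (h : IsMaxStableWith G A B) (hG : IsDistFun G)
    (hnd : ∃ x, 0 < G x ∧ G x < 1) {ρ : ℝ} (hρ : ∀ t, 0 < t → A t = t ^ ρ) (hρ0 : ρ ≠ 0) :
    ∃ μ, ∀ t u, 0 < t → G (t ^ ρ * u + μ) = G (u + μ) ^ t := by
  have h2 : (1 : ℝ) - 2 ^ ρ ≠ 0 := by
    rcases hρ0.lt_or_gt with hneg | hpos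
    · linarith [Real.rpow_lt_one_of_one_lt_of_neg one_lt_two hneg]
    · linarith [Real.one_lt_rpow one_lt_two hpos]
  refine ⟨B 2 / (1 - 2 ^ ρ), fun t u ht => ?_⟩
  -- the cocycle identity for `B`, read in both orders `2 * t` and `t * 2`
  have hB := (h.map_mul hG hnd two_pos ht).2
  rw [mul_comm, (h.map_mul hG hnd ht two_pos).2, hρ t ht, hρ 2 two_pos] at hB
  rw [← (h t ht).2, hρ t ht]
  congr 1
  field_simp
  linear_combination hB

lemma exists_comp_sub_log_eq (h : IsMaxStableWith G A B) (hG : IsDistFun G)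
    (hnd : ∃ x, 0 < G x ∧ G x < 1) (hA : ∀ t, 0 < t → A t = 1) :
    ∃ σ > 0, ∀ t x, 0 < t → G (x - σ * Real.log t) = G x ^ t := by
  let g : ℝ →+ ℝ := AddMonoidHom.mk' (fun u => B (Real.exp u)) fun u v => by
    simp only [Real.exp_add, (h.map_mul hG hnd (Real.exp_pos u) (Real.exp_pos v)).2,
      hA _ (Real.exp_pos v), one_mul]
  obtain ⟨z, hz⟩ := hnd
  have hg : StrictAnti g := fun u v huv => by
    have := h.strictAntiOn hG.mono hz (Real.exp_pos u) (Real.exp_pos v) (Real.exp_lt_exp.2 huv)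
    simp only [hA _ (Real.exp_pos u), hA _ (Real.exp_pos v)] at this
    simp only [g, AddMonoidHom.mk'_apply]
    linarith
  have hbdd : BddAbove (g '' Icc 0 1) := ⟨g 0, by rintro _ ⟨u, hu, rfl⟩; exact hg.antitone hu.1⟩
  have hg1 : g 1 < 0 := map_zero g ▸ hg one_pos
  refine ⟨-B (Real.exp 1), neg_pos.2 (by simpa [g] using hg1), fun t x ht => ?_⟩
  have hgt := g.eq_mul_of_bddAbove one_pos hbdd (Real.log t)
  simp only [g, AddMonoidHom.mk'_apply, Real.exp_log ht] at hgt
  rw [← (h t ht).2, hA t ht, hgt]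
  ring_nf

end IsMaxStableWith

lemma eq_gumbel_of_comp_sub_log_eq {G : ℝ → ℝ} {σ : ℝ} (hσ : 0 < σ)
    (hnd : ∃ x, 0 < G x ∧ G x < 1) (hinv : ∀ t x, 0 < t → G (x - σ * Real.log t) = G x ^ t) :
    ∃ μ, ∀ x, G x = gumbel ((x - μ) / σ) := by
  obtain ⟨z, hz₀, hz₁⟩ := hnd
  set L := -Real.log (G z)
  have hL : 0 < L := neg_pos.2 (Real.log_neg hz₀ hz₁)
  refine ⟨z + σ * Real.log L, fun x => ?_⟩
  have := hinv (Real.exp ((z - x) / σ)) z (Real.exp_pos _)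
  rw [Real.log_exp, show z - σ * ((z - x) / σ) = x by field_simp; ring] at this
  rw [this, Real.rpow_def_of_pos hz₀, gumbel, show -((x - (z + σ * Real.log L)) / σ) =
    (z - x) / σ + Real.log L by field_simp; ring, Real.exp_add, Real.exp_log hL]
  simp only [L]
  ring_nf

lemma mul_div_rpow_inv_eq {L y z ρ : ℝ} (hL : 0 < L) (hy : 0 ≤ y) (hz : 0 < z) (hρ : ρ ≠ 0) :
    L * (y / z) ^ ρ⁻¹ = (y / (z * L ^ (-ρ))) ^ ρ⁻¹ := by
  rw [Real.div_rpow hy hz.le, Real.div_rpow hy (by positivity),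
    Real.mul_rpow hz.le (by positivity), ← Real.rpow_mul hL.le, neg_mul, mul_inv_cancel₀ hρ,
    Real.rpow_neg_one]
  field_simp

section RpowInvariant

variable {G : ℝ → ℝ} {ρ : ℝ}

lemma apply_zero_eq_zero_or_one_of_rpow_invariant
    (hinv : ∀ t u, 0 < t → G (t ^ ρ * u) = G u ^ t) : G 0 = 0 ∨ G 0 = 1 := by
  have h := hinv 2 0 two_pos
  rw [mul_zero, Real.rpow_two] at h
  have : G 0 * (G 0 - 1) = 0 := by linear_combination -h
  exact (mul_eq_zero.1 this).imp id sub_eq_zero.1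

lemma eq_exp_of_rpow_invariant (hρ : ρ ≠ 0) (hinv : ∀ t u, 0 < t → G (t ^ ρ * u) = G u ^ t)
    {y z : ℝ} (hz : G z ∈ Ioo 0 1) (hyz : 0 < y / z) :
    G y = Real.exp (-(-Real.log (G z) * (y / z) ^ ρ⁻¹)) := by
  have hz0 : z ≠ 0 := by rintro rfl; simp at hyz
  have h := hinv ((y / z) ^ ρ⁻¹) z (Real.rpow_pos_of_pos hyz _)
  rw [← Real.rpow_mul hyz.le, inv_mul_cancel₀ hρ, Real.rpow_one, div_mul_cancel₀ _ hz0] at h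
  rw [h, Real.rpow_def_of_pos hz.1, neg_mul, neg_neg]

lemma eq_zero_of_rpow_invariant_of_neg (hG : IsDistFun G) (hρ : ρ < 0)
    (hinv : ∀ t u, 0 < t → G (t ^ ρ * u) = G u ^ t) {y : ℝ} (hy : y < 0) : G y = 0 := by
  by_contra hne
  have h₀ : Tendsto (fun t => G (t ^ ρ * y)) (𝓝[>] 0) (𝓝 0) :=
    hG.tendsto_atBot.comp ((tendsto_rpow_neg_nhdsGT_zero hρ).atTop_mul_const_of_neg hy)
  have h₁ : Tendsto (fun t => G (t ^ ρ * y)) (𝓝[>] 0) (𝓝 1) := by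
    have := (Real.continuousAt_const_rpow (a := G y) (b := 0) hne).tendsto.mono_left
      (nhdsWithin_le_nhds (s := Ioi 0))
    rw [Real.rpow_zero] at this
    exact this.congr' (eventually_nhdsWithin_of_forall fun t ht => (hinv t y ht).symm)
  exact zero_ne_one (tendsto_nhds_unique h₀ h₁)

lemma eq_one_of_rpow_invariant_of_pos (hG : IsDistFun G) (hρ : 0 < ρ)
    (hinv : ∀ t u, 0 < t → G (t ^ ρ * u) = G u ^ t) {y : ℝ} (hy : 0 < y) : G y = 1 := by
  by_contra hne
  have h₁ : Tendsto (fun t => G (t ^ ρ * y)) atTop (𝓝 1) :=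
    hG.tendsto_atTop.comp ((tendsto_rpow_atTop hρ).atTop_mul_const hy)
  have h₀ : Tendsto (fun t => G (t ^ ρ * y)) atTop (𝓝 0) :=
    (tendsto_rpow_atTop_of_base_lt_one _ (by linarith [hG.nonneg y])
      ((hG.le_one y).lt_of_ne hne)).congr'
      ((eventually_gt_atTop 0).mono fun t ht => (hinv t y ht).symm)
  exact zero_ne_one (tendsto_nhds_unique h₀ h₁)

theorem eq_frechet_of_rpow_invariant (hG : IsDistFun G) (hnd : ∃ x, 0 < G x ∧ G x < 1)
    (hρ : ρ < 0) (hinv : ∀ t u, 0 < t → G (t ^ ρ * u) = G u ^ t) :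
    ∃ σ > 0, ∃ α > 0, ∀ x, G x = frechet α (x / σ) := by
  obtain ⟨z, hz⟩ := hnd
  have h0 : G 0 = 0 := by
    refine (apply_zero_eq_zero_or_one_of_rpow_invariant hinv).resolve_right fun h1 => ?_
    rcases lt_or_ge z 0 with hz0 | hz0
    · linarith [eq_zero_of_rpow_invariant_of_neg hG hρ hinv hz0]
    · linarith [hG.mono hz0]
  have hz0 : 0 < z := lt_of_not_ge fun hz0 => by linarith [hG.mono hz0]
  set L := -Real.log (G z)
  have hL : 0 < L := neg_pos.2 (Real.log_neg hz.1 hz.2)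
  have hσ : 0 < z * L ^ (-ρ) := by positivity
  refine ⟨z * L ^ (-ρ), hσ, -ρ⁻¹, neg_pos.2 (inv_lt_zero.2 hρ), fun x => ?_⟩
  rcases le_or_gt x 0 with hx | hx
  · rw [frechet, if_neg (not_lt.2 (div_nonpos_of_nonpos_of_nonneg hx hσ.le))]
    exact le_antisymm (h0 ▸ hG.mono hx) (hG.nonneg x)
  · rw [frechet, if_pos (div_pos hx hσ), eq_exp_of_rpow_invariant hρ.ne hinv hz (div_pos hx hz0),
      neg_neg, mul_div_rpow_inv_eq hL hx.le hz0 hρ.ne]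

theorem eq_weibull_of_rpow_invariant (hG : IsDistFun G) (hnd : ∃ x, 0 < G x ∧ G x < 1)
    (hρ : 0 < ρ) (hinv : ∀ t u, 0 < t → G (t ^ ρ * u) = G u ^ t) :
    ∃ σ > 0, ∃ α > 0, ∀ x, G x = weibull α (x / σ) := by
  obtain ⟨z, hz⟩ := hnd
  have h0 : G 0 = 1 := by
    refine (apply_zero_eq_zero_or_one_of_rpow_invariant hinv).resolve_left fun h0 => ?_
    rcases le_or_gt z 0 with hz0 | hz0
    · linarith [hG.mono hz0]
    · linarith [eq_one_of_rpow_invariant_of_pos hG hρ hinv hz0]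
  have hz0 : z < 0 := lt_of_not_ge fun hz0 => by linarith [hG.mono hz0]
  set L := -Real.log (G z)
  have hL : 0 < L := neg_pos.2 (Real.log_neg hz.1 hz.2)
  have hσ : 0 < -z * L ^ (-ρ) := by have := neg_pos.2 hz0; positivity
  refine ⟨-z * L ^ (-ρ), hσ, ρ⁻¹, inv_pos.2 hρ, fun x => ?_⟩
  rcases le_or_gt 0 x with hx | hx
  · rw [weibull, if_neg (not_lt.2 (div_nonneg hx hσ.le))]
    exact le_antisymm (hG.le_one x) (h0 ▸ hG.mono hx)
  · rw [weibull, if_pos (div_neg_of_neg_of_pos hx hσ),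
      eq_exp_of_rpow_invariant hρ.ne' hinv hz (div_pos_of_neg_of_neg hx hz0),
      ← neg_div_neg_eq x z, mul_div_rpow_inv_eq hL (neg_nonneg.2 hx.le) (neg_pos.2 hz0) hρ.ne',
      neg_div]

end RpowInvariant

theorem IsMaxStableWith.exists_extremal_type {G A B : ℝ → ℝ} (h : IsMaxStableWith G A B)
    (hG : IsDistFun G) (hnd : ∃ x, 0 < G x ∧ G x < 1) :
    ∃ μ σ : ℝ, 0 < σ ∧
      ((∃ α > (0 : ℝ), ∀ x, G x = frechet α ((x - μ) / σ)) ∨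
        (∃ α > (0 : ℝ), ∀ x, G x = weibull α ((x - μ) / σ)) ∨
        ∀ x, G x = gumbel ((x - μ) / σ)) := by
  obtain ⟨ρ, hρ⟩ := h.exists_rpow hG hnd
  rcases eq_or_ne ρ 0 with rfl | hρ0
  · obtain ⟨σ, hσ, hinv⟩ := h.exists_comp_sub_log_eq hG hnd fun t ht => by simp [hρ t ht]
    obtain ⟨μ, hμ⟩ := eq_gumbel_of_comp_sub_log_eq hσ hnd hinv
    exact ⟨μ, σ, hσ, Or.inr (Or.inr hμ)⟩
  obtain ⟨μ, hinv⟩ := h.exists_comp_rpow_eq hG hnd hρ hρ0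
  have hnd' : ∃ x, 0 < G (x + μ) ∧ G (x + μ) < 1 := by
    obtain ⟨x, hx⟩ := hnd
    exact ⟨x - μ, by simpa using hx⟩
  rcases hρ0.lt_or_gt with hneg | hpos
  · obtain ⟨σ, hσ, α, hα, hF⟩ :=
      eq_frechet_of_rpow_invariant (hG.comp_add_const μ) hnd' hneg hinv
    exact ⟨μ, σ, hσ, Or.inl ⟨α, hα, fun x => by simpa using hF (x - μ)⟩⟩
  · obtain ⟨σ, hσ, α, hα, hW⟩ :=
      eq_weibull_of_rpow_invariant (hG.comp_add_const μ) hnd' hpos hinv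
    exact ⟨μ, σ, hσ, Or.inr (Or.inl ⟨α, hα, fun x => by simpa using hW (x - μ)⟩)⟩

/-- **Fisher–Tippett theorem.**  If the normalised maxima of an iid sample with
distribution function `F` converge in distribution to a nondegenerate law `G`
(i.e. `F(aₙ x + bₙ)ⁿ → G(x)` at every continuity point `x` of `G`), then, to
within type (location `μ` and scale `σ`), `G` is exactly one of the Fréchet,
Weibull or Gumbel laws. -/
theorem fisher_tippett (F G : ℝ → ℝ) (hF : IsDistFun F) (hG : IsDistFun G)
    (hnondeg : ∃ x, 0 < G x ∧ G x < 1)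
    (a b : ℕ → ℝ) (ha : ∀ n, 0 < a n)
    (hconv : ∀ x : ℝ, ContinuousAt G x →
      Tendsto (fun n => F (a n * x + b n) ^ n) atTop (𝓝 (G x))) :
    ∃ μ σ : ℝ, 0 < σ ∧
      (((∃ α > (0:ℝ), ∀ x, G x = frechet α ((x - μ) / σ)) ∧
          ¬ (∃ α > (0:ℝ), ∀ x, G x = weibull α ((x - μ) / σ)) ∧
          ¬ (∀ x, G x = gumbel ((x - μ) / σ))) ∨
        (¬ (∃ α > (0:ℝ), ∀ x, G x = frechet α ((x - μ) / σ)) ∧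
          (∃ α > (0:ℝ), ∀ x, G x = weibull α ((x - μ) / σ)) ∧
          ¬ (∀ x, G x = gumbel ((x - μ) / σ))) ∨
        (¬ (∃ α > (0:ℝ), ∀ x, G x = frechet α ((x - μ) / σ)) ∧
          ¬ (∃ α > (0:ℝ), ∀ x, G x = weibull α ((x - μ) / σ)) ∧
          (∀ x, G x = gumbel ((x - μ) / σ)))) := by
  obtain ⟨A, B, hAB⟩ := exists_isMaxStableWith_of_tendsto hF hG hnondeg ha hconv
  obtain ⟨μ, σ, hσ, htype⟩ := hAB.exists_extremal_type hG hnondeg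
  refine ⟨μ, σ, hσ, ?_⟩
  have hF₀ : (∃ α > (0:ℝ), ∀ x, G x = frechet α ((x - μ) / σ)) → G μ = 0 :=
    fun ⟨α, _, h⟩ => by simp [h μ, frechet]
  have hW₀ : (∃ α > (0:ℝ), ∀ x, G x = weibull α ((x - μ) / σ)) → G μ = 1 :=
    fun ⟨α, _, h⟩ => by simp [h μ, weibull]
  have hΛ₀ : (∀ x, G x = gumbel ((x - μ) / σ)) → G μ = Real.exp (-1) :=
    fun h => by simp [h μ, gumbel]
  have he₀ : 0 < Real.exp (-1) := Real.exp_pos _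
  have he₁ : Real.exp (-1) < 1 := Real.exp_lt_one_iff.2 (by norm_num)
  rcases htype with h | h | h
  · exact Or.inl ⟨h, fun h' => by linarith [hF₀ h, hW₀ h'], fun h' => by linarith [hF₀ h, hΛ₀ h']⟩
  · exact Or.inr (Or.inl ⟨fun h' => by linarith [hF₀ h', hW₀ h], h,
      fun h' => by linarith [hW₀ h, hΛ₀ h']⟩)
  · exact Or.inr (Or.inr ⟨fun h' => by linarith [hF₀ h', hΛ₀ h],
      fun h' => by linarith [hW₀ h', hΛ₀ h], h⟩)
end

section
/- Gnedenko's Weibull domain-of-attraction theorem: Let F be a distribution function and α > 0. Then F ∈ D(Ψ_α) if and only if the upper end-point x₊ := sup{x : F(x) < 1} is finite and the function x ↦ F̄(x₊ − 1/x) is regularly varying at infinity with index −α. -/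
/-!
Sufficiency: `g x = 1 - F (x₊ - 1 / x)` decreases to `0` on `(0, ∞)` and is regularly varying
with index `-α`. Taking for `c n` the generalized inverse of `g` at `1 / n`, the bracket
`g (μ c n) ≤ 1 / n ≤ g (λ c n)` for `λ < 1 < μ` gives `n g (c n) → 1`, hence
`n (1 - F (x₊ + x / c n)) = n g (c n / (-x)) → (-x) ^ α` for `x < 0`, which is equivalent to
`F (x₊ + x / c n) ^ n → Ψ_α(x)`.

Necessity: `F (a n x + b n) ^ n → Ψ_α(x)` is equivalent to `n (1 - F (a n x + b n)) → (-x) ^ α`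
for `x < 0`. Along `2 n` the limit becomes `√Ψ_α(x) = Ψ_α(2 ^ (-1/α) x)`, so convergence of types
gives `a (2 n) / a n → 2 ^ (-1/α) < 1` and `b (2 n) - b n = o(a n)`. Summing along `2 ^ J n`
bounds `b` from above, so `x₊` is finite, and shows `x₊ - b n = o(a n)`. Therefore
`n (1 - F (x₊ - a n s)) → s ^ α`, and since `g` is monotone this sequential statement upgrades to
regular variation.
-/

open Filter Topology

/-- `F` lies in the domain of attraction of `G`. -/
def MemDomAttr (F G : ℝ → ℝ) : Prop :=
  ∃ a b : ℕ → ℝ, (∀ n, 0 < a n) ∧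
    ∀ x : ℝ, ContinuousAt G x →
      Tendsto (fun n => F (a n * x + b n) ^ n) atTop (𝓝 (G x))

/-- `g` is regularly varying at infinity with index `ρ`. -/
def RegVary (g : ℝ → ℝ) (ρ : ℝ) : Prop :=
  (∀ᶠ x in atTop, 0 < g x) ∧
    ∀ lam : ℝ, 0 < lam →
      Tendsto (fun x => g (lam * x) / g x) atTop (𝓝 (lam ^ ρ))

open Set

theorem tendsto_of_squeeze_family {ι : Type*} {l : Filter ι} {u : ι → ℝ} {f : ℝ → ι → ℝ}
    {φ : ℝ → ℝ} {s₀ : ℝ} (hφ : ContinuousAt φ s₀)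
    (hlow : ∀ᶠ s in 𝓝[<] s₀, Tendsto (f s) l (𝓝 (φ s)) ∧ ∀ᶠ i in l, f s i ≤ u i)
    (hup : ∀ᶠ s in 𝓝[>] s₀, Tendsto (f s) l (𝓝 (φ s)) ∧ ∀ᶠ i in l, u i ≤ f s i) :
    Tendsto u l (𝓝 (φ s₀)) := by
  refine tendsto_order.2 ⟨fun y hy => ?_, fun y hy => ?_⟩
  · obtain ⟨s, ⟨hfs, hle⟩, hys⟩ := (hlow.and
      ((hφ.tendsto.mono_left nhdsWithin_le_nhds).eventually (lt_mem_nhds hy))).exists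
    filter_upwards [hfs.eventually (lt_mem_nhds hys), hle] with i h₁ h₂ using h₁.trans_le h₂
  · obtain ⟨s, ⟨hfs, hle⟩, hys⟩ := (hup.and
      ((hφ.tendsto.mono_left nhdsWithin_le_nhds).eventually (gt_mem_nhds hy))).exists
    filter_upwards [hfs.eventually (gt_mem_nhds hys), hle] with i h₁ h₂ using h₂.trans_lt h₁

theorem tendsto_mul_neg_log_iff {ι : Type*} {l : Filter ι} {w y : ι → ℝ} {T : ℝ}
    (hw : ∀ i, 0 ≤ w i) (hy : Tendsto y l (𝓝 1)) :
    Tendsto (fun i => w i * -Real.log (y i)) l (𝓝 T) ↔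
      Tendsto (fun i => w i * (1 - y i)) l (𝓝 T) := by
  have hpos : ∀ᶠ i in l, 0 < y i := hy.eventually (lt_mem_nhds one_pos)
  -- `1 - y ≤ -log y ≤ (1 - y) / y`
  have hlow : ∀ᶠ i in l, w i * (1 - y i) ≤ w i * -Real.log (y i) := by
    filter_upwards [hpos] with i hi
    exact mul_le_mul_of_nonneg_left (by linarith [Real.log_le_sub_one_of_pos hi]) (hw i)
  have hup : ∀ᶠ i in l, y i * (w i * -Real.log (y i)) ≤ w i * (1 - y i) := by
    filter_upwards [hpos] with i hi
    have h := mul_le_mul_of_nonneg_left (Real.one_sub_inv_le_log_of_pos hi)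
      (mul_nonneg (hw i) hi.le)
    field_simp at h
    linarith
  constructor
  · intro h
    have h' := hy.mul h
    rw [one_mul] at h'
    exact tendsto_of_tendsto_of_tendsto_of_le_of_le' h' h hup hlow
  · intro h
    have h' : Tendsto (fun i => w i * (1 - y i) / y i) l (𝓝 (T / 1)) := h.div hy one_ne_zero
    rw [div_one] at h'
    refine tendsto_of_tendsto_of_tendsto_of_le_of_le' h h' hlow ?_
    filter_upwards [hup, hpos] with i hi hi'
    rwa [le_div_iff₀ hi', mul_comm]

theorem tendsto_zero_of_tendsto_natCast_mul {u : ℕ → ℝ} {T : ℝ}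
    (h : Tendsto (fun n : ℕ => (n : ℝ) * u n) atTop (𝓝 T)) : Tendsto u atTop (𝓝 0) := by
  refine (h.div_atTop tendsto_natCast_atTop_atTop).congr' ?_
  filter_upwards [eventually_ne_atTop 0] with n hn
  field_simp

theorem tendsto_pow_iff_tendsto_natCast_mul_one_sub {y : ℕ → ℝ} (hy : ∀ n, 0 ≤ y n) {T : ℝ} :
    Tendsto (fun n => y n ^ n) atTop (𝓝 (Real.exp (-T))) ↔
      Tendsto (fun n : ℕ => (n : ℝ) * (1 - y n)) atTop (𝓝 T) := by
  constructor
  · intro h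
    have hpos : ∀ᶠ n in atTop, 0 < y n := by
      filter_upwards [h.eventually (lt_mem_nhds (Real.exp_pos _)), eventually_ne_atTop 0]
        with n hn hn0
      exact (hy n).lt_of_ne fun h0 => by simp [← h0, zero_pow hn0] at hn
    have hlog : Tendsto (fun n : ℕ => (n : ℝ) * -Real.log (y n)) atTop (𝓝 T) := by
      have := ((Real.continuousAt_log (Real.exp_pos _).ne').tendsto.comp h).neg
      simpa [Function.comp_def, Real.log_pow] using this
    have hy1 : Tendsto y atTop (𝓝 1) := by
      have hlog0 : Tendsto (fun n => Real.log (y n)) atTop (𝓝 0) := by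
        simpa using (tendsto_zero_of_tendsto_natCast_mul hlog).neg
      have hexp : Tendsto (fun n => Real.exp (Real.log (y n))) atTop (𝓝 (Real.exp 0)) :=
        (Real.continuous_exp.tendsto 0).comp hlog0
      rw [Real.exp_zero] at hexp
      refine hexp.congr' ?_
      filter_upwards [hpos] with n hn using Real.exp_log hn
    exact (tendsto_mul_neg_log_iff (fun n => n.cast_nonneg) hy1).1 hlog
  · intro h
    have hy1 : Tendsto y atTop (𝓝 1) := by
      simpa using (tendsto_zero_of_tendsto_natCast_mul h).const_sub 1
    have hpos : ∀ᶠ n in atTop, 0 < y n := hy1.eventually (lt_mem_nhds one_pos)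
    have hlog := (tendsto_mul_neg_log_iff (fun n => n.cast_nonneg) hy1).2 h
    refine ((Real.continuous_exp.tendsto _).comp hlog.neg).congr' ?_
    filter_upwards [hpos] with n hn
    simp [← Real.log_pow, Real.exp_log (pow_pos hn n)]

theorem RegVary.eq_zero_of_tendsto {g : ℝ → ℝ} {ρ L : ℝ} (hg : RegVary g ρ) (hρ : ρ ≠ 0)
    (hL : Tendsto g atTop (𝓝 L)) : L = 0 := by
  by_contra hL0
  have h : Tendsto (fun x => g (2 * x) / g x) atTop (𝓝 (L / L)) :=
    (hL.comp (tendsto_id.const_mul_atTop two_pos)).div hL hL0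
  rw [div_self hL0] at h
  have h2 : (2 : ℝ) ^ ρ = 2 ^ (0 : ℝ) := by
    rw [Real.rpow_zero]; exact tendsto_nhds_unique (hg.2 2 two_pos) h
  exact hρ ((Real.rpow_right_inj two_pos (by norm_num)).1 h2)

theorem Filter.Tendsto.natCast_mul_comp_succ {u : ℕ → ℝ} {L : ℝ}
    (h : Tendsto (fun n : ℕ => (n : ℝ) * u n) atTop (𝓝 L)) :
    Tendsto (fun n : ℕ => (n : ℝ) * u (n + 1)) atTop (𝓝 L) := by
  have h' := (tendsto_natCast_div_add_atTop (1 : ℝ)).mul (h.comp (tendsto_add_atTop_nat 1))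
  rw [one_mul] at h'
  refine h'.congr fun n => ?_
  simp only [Function.comp_apply, Nat.cast_add, Nat.cast_one]
  field_simp

theorem exists_tendsto_atTop_bracket {d : ℕ → ℝ} (hd : Tendsto d atTop atTop) :
    ∃ m : ℝ → ℕ, Tendsto m atTop atTop ∧ ∀ᶠ t in atTop, d (m t) ≤ t ∧ t < d (m t + 1) := by
  have hbdd : ∀ t, BddAbove {n | d n ≤ t} := fun t => by
    obtain ⟨N, hN⟩ := eventually_atTop.1 (hd.eventually_gt_atTop t)
    exact ⟨N, fun n hn => not_lt.1 fun h => (hN n h.le).not_ge hn⟩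
  refine ⟨fun t => sSup {n | d n ≤ t}, tendsto_atTop.2 fun N => ?_, ?_⟩
  · filter_upwards [eventually_ge_atTop (d N)] with t ht using le_csSup (hbdd t) ht
  · filter_upwards [eventually_ge_atTop (d 0)] with t ht
    exact ⟨Nat.sSup_mem ⟨0, ht⟩ (hbdd t),
      not_le.1 fun h => (Nat.lt_succ_self _).not_ge (le_csSup (hbdd t) h)⟩

theorem regVary_of_tendsto_natCast_mul {g : ℝ → ℝ} {ρ : ℝ} (hpos : ∀ x, 0 < x → 0 < g x)
    (hanti : AntitoneOn g (Ioi 0)) {d : ℕ → ℝ} (hd : Tendsto d atTop atTop)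
    (hlim : ∀ x, 0 < x → Tendsto (fun n : ℕ => (n : ℝ) * g (x * d n)) atTop (𝓝 (x ^ ρ))) :
    RegVary g ρ := by
  refine ⟨(eventually_gt_atTop 0).mono hpos, fun lam hlam => ?_⟩
  have ratio : ∀ u v : ℕ → ℝ, Tendsto (fun n : ℕ => (n : ℝ) * u n) atTop (𝓝 (lam ^ ρ)) →
      Tendsto (fun n : ℕ => (n : ℝ) * v n) atTop (𝓝 1) →
      Tendsto (fun n => u n / v n) atTop (𝓝 (lam ^ ρ)) := fun u v hu hv => by
    have h : Tendsto (fun n : ℕ => (n : ℝ) * u n / ((n : ℝ) * v n)) atTop (𝓝 (lam ^ ρ / 1)) :=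
      hu.div hv one_ne_zero
    rw [div_one] at h
    refine h.congr' ?_
    filter_upwards [eventually_ne_atTop 0] with n hn
    exact mul_div_mul_left _ _ (Nat.cast_ne_zero.2 hn)
  have h1 : Tendsto (fun n : ℕ => (n : ℝ) * g (d n)) atTop (𝓝 1) := by
    simpa using hlim 1 one_pos
  obtain ⟨m, hm, hbr⟩ := exists_tendsto_atTop_bracket hd
  have hlow := (ratio _ _ (hlim lam hlam).natCast_mul_comp_succ h1).comp hm
  have hup := (ratio _ _ (hlim lam hlam) h1.natCast_mul_comp_succ).comp hm
  refine tendsto_of_tendsto_of_tendsto_of_le_of_le' hlow hup ?_ ?_ <;>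
    filter_upwards [hbr, (hd.comp hm).eventually_gt_atTop 0] with t ⟨ht, ht'⟩ hdm
  · have ht0 : 0 < t := hdm.trans_le ht
    exact div_le_div₀ (hpos _ (mul_pos hlam ht0)).le
      (hanti (mul_pos hlam ht0) (mul_pos hlam (ht0.trans ht')) (by gcongr))
      (hpos _ ht0) (hanti hdm ht0 ht)
  · have ht0 : 0 < t := hdm.trans_le ht
    exact div_le_div₀ (hpos _ (mul_pos hlam hdm)).le
      (hanti (mul_pos hlam hdm) (mul_pos hlam ht0) (by gcongr; exact ht))
      (hpos _ (ht0.trans ht')) (hanti ht0 (ht0.trans ht') ht'.le)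

noncomputable def tailInverse (g : ℝ → ℝ) (p : ℝ) : ℝ := sInf {x | 0 < x ∧ g x < p}

section TailInverse

variable {g : ℝ → ℝ} {p x : ℝ}

theorem le_of_lt_tailInverse (hx : 0 < x) (h : x < tailInverse g p) : p ≤ g x :=
  not_lt.1 fun h' => h.not_ge (csInf_le ⟨0, fun _ hy => hy.1.le⟩ ⟨hx, h'⟩)

theorem lt_of_tailInverse_lt (hanti : AntitoneOn g (Ioi 0)) (hne : ∃ x, 0 < x ∧ g x < p)
    (h : tailInverse g p < x) : g x < p := by
  obtain ⟨z, hz, hzx⟩ := exists_lt_of_csInf_lt hne h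
  exact (hanti hz.1 (hz.1.trans hzx) hzx.le).trans_lt hz.2

theorem exists_pos_lt_of_tendsto_zero (hg : Tendsto g atTop (𝓝 0)) (hp : 0 < p) :
    ∃ x, 0 < x ∧ g x < p :=
  ((eventually_gt_atTop 0).and (hg.eventually (gt_mem_nhds hp))).exists

theorem tendsto_tailInverse (hpos : ∀ x, 0 < x → 0 < g x) (hanti : AntitoneOn g (Ioi 0))
    (hg : Tendsto g atTop (𝓝 0)) : Tendsto (tailInverse g) (𝓝[>] 0) atTop := by
  refine tendsto_atTop.2 fun M => ?_
  have hM : 0 < max M 1 := lt_max_of_lt_right one_pos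
  filter_upwards [Ioo_mem_nhdsGT (hpos _ hM), self_mem_nhdsWithin] with p hp hp0
  refine (le_max_left M 1).trans (not_lt.1 fun h => ?_)
  exact (lt_of_tailInverse_lt hanti (exists_pos_lt_of_tendsto_zero hg hp0) h).not_gt hp.2

theorem RegVary.tendsto_natCast_mul_tailInverse {ρ : ℝ} (hrv : RegVary g ρ)
    (hpos : ∀ x, 0 < x → 0 < g x) (hanti : AntitoneOn g (Ioi 0)) (hg : Tendsto g atTop (𝓝 0)) :
    Tendsto (fun n : ℕ => (n : ℝ) * g (tailInverse g (n : ℝ)⁻¹)) atTop (𝓝 1) := by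
  set c := fun n : ℕ => tailInverse g (n : ℝ)⁻¹
  have hc : Tendsto c atTop atTop := (tendsto_tailInverse hpos hanti hg).comp
    (tendsto_inv_atTop_nhdsGT_zero.comp tendsto_natCast_atTop_atTop)
  -- squeeze `n g(c n)` between `g(c n) / g(s c n) → s ^ -ρ` for `s` on either side of `1`
  have hlim : ∀ s, 0 < s → Tendsto (fun n => g (c n) / g (s * c n)) atTop (𝓝 (s ^ (-ρ))) :=
    fun s hs => by
      simpa [Real.rpow_neg hs.le] using ((hrv.2 s hs).comp hc).inv₀ (Real.rpow_pos_of_pos hs ρ).ne'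
  rw [← Real.one_rpow (-ρ)]
  refine tendsto_of_squeeze_family (f := fun s n => g (c n) / g (s * c n))
    (φ := fun s => s ^ (-ρ)) (s₀ := 1)
    (Real.continuousAt_rpow_const 1 (-ρ) (Or.inl one_ne_zero)) ?_ ?_
  · filter_upwards [Ioo_mem_nhdsLT zero_lt_one] with s ⟨hs0, hs1⟩
    refine ⟨hlim s hs0, ?_⟩
    filter_upwards [hc.eventually_gt_atTop 0, eventually_gt_atTop 0] with n hcn hn
    have hsc : 0 < g (s * c n) := hpos _ (mul_pos hs0 hcn)
    have h1 : (n : ℝ)⁻¹ ≤ g (s * c n) :=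
      le_of_lt_tailInverse (mul_pos hs0 hcn) (mul_lt_of_lt_one_left hcn hs1)
    rw [div_le_iff₀ hsc, mul_assoc, mul_comm (g (c n)), ← mul_assoc]
    refine le_mul_of_one_le_left (hpos _ hcn).le ?_
    rwa [inv_le_iff_one_le_mul₀' (by exact_mod_cast hn)] at h1
  · filter_upwards [self_mem_nhdsWithin] with s (hs1 : 1 < s)
    refine ⟨hlim s (zero_lt_one.trans hs1), ?_⟩
    filter_upwards [hc.eventually_gt_atTop 0, eventually_gt_atTop 0] with n hcn hn
    have hn' : (0 : ℝ) < n := by exact_mod_cast hn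
    have hsc : 0 < g (s * c n) := hpos _ (mul_pos (zero_lt_one.trans hs1) hcn)
    have h1 : g (s * c n) < (n : ℝ)⁻¹ := lt_of_tailInverse_lt hanti
      (exists_pos_lt_of_tendsto_zero hg (inv_pos.2 hn')) (lt_mul_of_one_lt_left hcn hs1)
    rw [le_div_iff₀ hsc, mul_assoc, mul_comm (g (c n)), ← mul_assoc]
    refine mul_le_of_le_one_left (hpos _ hcn).le ?_
    simpa [hn'.ne'] using (mul_lt_mul_of_pos_left h1 hn').le

theorem RegVary.tendsto_natCast_mul_apply_mul_tailInverse {ρ : ℝ} (hrv : RegVary g ρ)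
    (hpos : ∀ x, 0 < x → 0 < g x) (hanti : AntitoneOn g (Ioi 0)) (hg : Tendsto g atTop (𝓝 0))
    {s : ℝ} (hs : 0 < s) :
    Tendsto (fun n : ℕ => (n : ℝ) * g (s * tailInverse g (n : ℝ)⁻¹)) atTop (𝓝 (s ^ ρ)) := by
  have hc := (tendsto_tailInverse hpos hanti hg).comp
    (tendsto_inv_atTop_nhdsGT_zero.comp tendsto_natCast_atTop_atTop)
  have h := ((hrv.2 s hs).comp hc).mul (hrv.tendsto_natCast_mul_tailInverse hpos hanti hg)
  rw [mul_one] at h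
  refine h.congr' ?_
  filter_upwards [hc.eventually_gt_atTop 0] with n hn
  simp only [Function.comp_apply] at hn ⊢
  rw [div_mul_comm, mul_div_cancel_right₀ _ (hpos _ hn).ne', mul_comm]

end TailInverse

section Weibull

variable {α : ℝ}

theorem weibull_of_nonpos (hα : 0 < α) {x : ℝ} (hx : x ≤ 0) :
    weibull α x = Real.exp (-((-x) ^ α)) := by
  rcases hx.lt_or_eq with hx | rfl
  · exact if_pos hx
  · simp [weibull, Real.zero_rpow hα.ne']

theorem weibull_of_nonneg (α : ℝ) {x : ℝ} (hx : 0 ≤ x) : weibull α x = 1 :=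
  if_neg hx.not_gt

theorem continuous_weibull (hα : 0 < α) : Continuous (weibull α) := by
  have h : weibull α = fun x => Real.exp (-(max (-x) 0 ^ α)) := by
    ext x
    rcases le_total x 0 with hx | hx
    · rw [weibull_of_nonpos hα hx, max_eq_left (neg_nonneg.2 hx)]
    · rw [weibull_of_nonneg α hx, max_eq_right (neg_nonpos.2 hx), Real.zero_rpow hα.ne']
      simp
  rw [h]
  fun_prop (disch := exact hα.le)

theorem strictMonoOn_weibull (hα : 0 < α) : StrictMonoOn (weibull α) (Iic 0) := by
  intro x hx y hy hxy
  rw [weibull_of_nonpos hα hx, weibull_of_nonpos hα hy, Real.exp_lt_exp, neg_lt_neg_iff]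
  exact Real.rpow_lt_rpow (neg_nonneg.2 hy) (neg_lt_neg hxy) hα

theorem sqrt_weibull (hα : 0 < α) (x : ℝ) :
    √(weibull α x) = weibull α ((2 : ℝ) ^ (-α⁻¹) * x) := by
  have hc : 0 < (2 : ℝ) ^ (-α⁻¹) := by positivity
  rcases le_total x 0 with hx | hx
  · have hcx : (2 : ℝ) ^ (-α⁻¹) * x ≤ 0 := mul_nonpos_of_nonneg_of_nonpos hc.le hx
    have hcα : ((2 : ℝ) ^ (-α⁻¹)) ^ α = 2⁻¹ := by
      rw [← Real.rpow_mul zero_le_two, neg_mul, inv_mul_cancel₀ hα.ne', Real.rpow_neg_one]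
    rw [weibull_of_nonpos hα hx, weibull_of_nonpos hα hcx, ← Real.exp_half, ← mul_neg,
      Real.mul_rpow hc.le (neg_nonneg.2 hx), hcα]
    ring_nf
  · rw [weibull_of_nonneg α hx, weibull_of_nonneg α (by positivity), Real.sqrt_one]

end Weibull

namespace IsDistFun

variable {F : ℝ → ℝ}

theorem nonneg_s2 (hF : IsDistFun F) (x : ℝ) : 0 ≤ F x :=
  le_of_tendsto hF.2.2.1 ((eventually_le_atBot x).mono fun _ hy => hF.1 hy)

theorem le_one_s2 (hF : IsDistFun F) (x : ℝ) : F x ≤ 1 :=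
  ge_of_tendsto hF.2.2.2 ((eventually_ge_atTop x).mono fun _ hy => hF.1 hy)

theorem nonempty_lt_one (hF : IsDistFun F) : {x | F x < 1}.Nonempty :=
  (hF.2.2.1.eventually (gt_mem_nhds one_pos)).exists

theorem eq_one_of_le (hF : IsDistFun F) {x₀ y : ℝ} (hx₀ : IsLUB {x | F x < 1} x₀)
    (hy : x₀ ≤ y) : F y = 1 := by
  have h : ∀ z, x₀ < z → F z = 1 := fun z hz =>
    (hF.le_one_s2 z).antisymm (not_lt.1 fun h => hz.not_ge (hx₀.1 h))
  rcases hy.lt_or_eq with hy | rfl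
  · exact h y hy
  · exact tendsto_nhds_unique ((hF.2.1 _).mono_left (nhdsWithin_mono _ Ioi_subset_Ici_self))
      (tendsto_const_nhds.congr' (eventually_nhdsWithin_of_forall fun z hz => (h z hz).symm))

end IsDistFun

section EndPoint

variable {F : ℝ → ℝ} {x₀ : ℝ}

theorem Monotone.lt_one_of_lt (hF : Monotone F) (hx₀ : IsLUB {x | F x < 1} x₀) {z : ℝ}
    (hz : z < x₀) : F z < 1 := by
  obtain ⟨w, hw, hzw, -⟩ := hx₀.exists_between hz
  exact (hF hzw.le).trans_lt hw

theorem Monotone.one_sub_apply_sub_one_div_pos (hF : Monotone F)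
    (hx₀ : IsLUB {x | F x < 1} x₀) {x : ℝ} (hx : 0 < x) : 0 < 1 - F (x₀ - 1 / x) :=
  sub_pos.2 (hF.lt_one_of_lt hx₀ (sub_lt_self _ (one_div_pos.2 hx)))

theorem Monotone.antitoneOn_one_sub_apply_sub_one_div (hF : Monotone F) :
    AntitoneOn (fun x => 1 - F (x₀ - 1 / x)) (Ioi 0) := fun _ hx _ _ hxy =>
  sub_le_sub_left (hF (sub_le_sub_left (one_div_le_one_div_of_le hx hxy) _)) _

theorem Monotone.tendsto_one_sub_apply_sub_one_div (hF : Monotone F) :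
    Tendsto (fun x => 1 - F (x₀ - 1 / x)) atTop (𝓝 (1 - Function.leftLim F x₀)) := by
  have h : Tendsto (fun x : ℝ => x₀ - 1 / x) atTop (𝓝[<] x₀) := by
    refine tendsto_nhdsWithin_iff.2 ⟨?_, (eventually_gt_atTop 0).mono fun x hx =>
      sub_lt_self _ (one_div_pos.2 hx)⟩
    simpa using tendsto_const_nhds.sub (tendsto_const_nhds.div_atTop tendsto_id (a := (1 : ℝ)))
  exact tendsto_const_nhds.sub ((hF.tendsto_leftLim x₀).comp h)

theorem Monotone.tendsto_of_tendsto_apply_one {ι : Type*} {l : Filter ι} (hF : Monotone F)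
    (hx₀ : IsLUB {x | F x < 1} x₀) {u : ι → ℝ} (hlt : ∀ᶠ i in l, F (u i) < 1)
    (h1 : Tendsto (fun i => F (u i)) l (𝓝 1)) : Tendsto u l (𝓝 x₀) := by
  refine tendsto_order.2 ⟨fun y hy => ?_, fun y hy => ?_⟩
  · filter_upwards [h1.eventually (lt_mem_nhds (hF.lt_one_of_lt hx₀ hy))] with i hi
    exact hF.reflect_lt hi
  · filter_upwards [hlt] with i hi using (hx₀.1 hi).trans_lt hy

end EndPoint

theorem IsDistFun.memDomAttr_weibull {F : ℝ → ℝ} (hF : IsDistFun F) {α : ℝ} (hα : 0 < α)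
    {x₀ : ℝ} (hx₀ : IsLUB {x | F x < 1} x₀) (hrv : RegVary (fun x => 1 - F (x₀ - 1 / x)) (-α)) :
    MemDomAttr F (weibull α) := by
  set g := fun x => 1 - F (x₀ - 1 / x)
  have hpos : ∀ x, 0 < x → 0 < g x := fun x => hF.1.one_sub_apply_sub_one_div_pos hx₀
  have hanti : AntitoneOn g (Ioi 0) := hF.1.antitoneOn_one_sub_apply_sub_one_div
  have hg : Tendsto g atTop (𝓝 0) := by
    have h := hF.1.tendsto_one_sub_apply_sub_one_div (x₀ := x₀)
    rwa [hrv.eq_zero_of_tendsto (neg_ne_zero.2 hα.ne') h] at h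
  set c := fun n : ℕ => tailInverse g (n : ℝ)⁻¹
  have hc : Tendsto c atTop atTop := (tendsto_tailInverse hpos hanti hg).comp
    (tendsto_inv_atTop_nhdsGT_zero.comp tendsto_natCast_atTop_atTop)
  refine ⟨fun n => (max (c n) 1)⁻¹, fun _ => x₀, fun n => by positivity, fun x _ => ?_⟩
  rcases le_or_gt 0 x with hx | hx
  · rw [weibull_of_nonneg α hx]
    refine tendsto_const_nhds.congr fun n => ?_
    rw [hF.eq_one_of_le hx₀ (le_add_of_nonneg_left (by positivity)), one_pow]
  · have hx' : 0 < -x := neg_pos.2 hx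
    rw [weibull_of_nonpos hα hx.le,
      tendsto_pow_iff_tendsto_natCast_mul_one_sub fun n => hF.nonneg_s2 _]
    have h := hrv.tendsto_natCast_mul_apply_mul_tailInverse hpos hanti hg (inv_pos.2 hx')
    rw [Real.inv_rpow hx'.le, Real.rpow_neg hx'.le, inv_inv] at h
    refine h.congr' ?_
    filter_upwards [hc.eventually_ge_atTop 1] with n hn
    simp only [g, c, max_eq_left hn] at hn ⊢
    congr 3
    field_simp
    ring

theorem eventually_lt_of_tendsto_pow {F : ℝ → ℝ} (hF : Monotone F) (hF0 : ∀ x, 0 ≤ F x)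
    {u v : ℕ → ℝ} {p q : ℝ} (hu : Tendsto (fun n => F (u n) ^ n) atTop (𝓝 p))
    (hv : Tendsto (fun n => F (v n) ^ n) atTop (𝓝 q)) (hpq : p < q) :
    ∀ᶠ n in atTop, u n < v n := by
  filter_upwards [hu.eventually_lt hv hpq] with n hn
  exact not_le.1 fun h => hn.not_ge (pow_le_pow_left₀ (hF0 _) (hF h) n)

/-- A form of Khintchine's convergence of types. -/
theorem tendsto_div_sub_of_tendsto_pow {F G : ℝ → ℝ} (hF : Monotone F) (hF0 : ∀ x, 0 ≤ F x)
    (hG : StrictMonoOn G (Iic 0)) {a b u : ℕ → ℝ} (ha : ∀ n, 0 < a n)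
    (hab : ∀ x, Tendsto (fun n => F (a n * x + b n) ^ n) atTop (𝓝 (G x))) {z : ℝ} (hz : z < 0)
    (hu : Tendsto (fun n => F (u n) ^ n) atTop (𝓝 (G z))) :
    Tendsto (fun n => (u n - b n) / a n) atTop (𝓝 z) := by
  refine tendsto_order.2 ⟨fun x hx => ?_, fun x hx => ?_⟩
  · filter_upwards [eventually_lt_of_tendsto_pow hF hF0 (hab x) hu
      (hG (hx.trans hz).le hz.le hx)] with n hn
    rw [lt_div_iff₀ (ha n)]
    linarith
  · have hx' : z < min x 0 := lt_min hx hz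
    filter_upwards [eventually_lt_of_tendsto_pow hF hF0 hu (hab (min x 0))
      (hG hz.le (min_le_right x 0) hx')] with n hn
    rw [div_lt_iff₀ (ha n)]
    nlinarith [mul_le_mul_of_nonneg_left (min_le_left x 0) (ha n).le]

theorem abs_sub_le_of_doubling {a b : ℕ → ℝ} {r ε : ℝ} {N : ℕ} (hr : r < 1) (hε : 0 ≤ ε)
    (ha : ∀ n, 0 ≤ a n) (h : ∀ n ≥ N, a (2 * n) ≤ r * a n ∧ |b (2 * n) - b n| ≤ ε * a n)
    {n : ℕ} (hn : N ≤ n) (J : ℕ) : |b (2 ^ J * n) - b n| ≤ ε * a n / (1 - r) := by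
  have hr' : 0 < 1 - r := sub_pos.2 hr
  -- the potential `|b (2 ^ J * n) - b n| + ε * a (2 ^ J * n) / (1 - r)` is nonincreasing in `J`
  have key : ∀ J : ℕ, |b (2 ^ J * n) - b n| + ε * a (2 ^ J * n) / (1 - r) ≤ ε * a n / (1 - r) := by
    intro J
    induction J with
    | zero => simp
    | succ J ih =>
      set m := 2 ^ J * n
      obtain ⟨h₁, h₂⟩ := h m (hn.trans (Nat.le_mul_of_pos_left n (by positivity)))
      have h₃ : |b (2 * m) - b n| ≤ |b (2 * m) - b m| + |b m - b n| := abs_sub_le _ _ _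
      have h₄ : ε * a (2 * m) / (1 - r) ≤ ε * (r * a m) / (1 - r) := by gcongr
      have h₅ : ε * a m + ε * (r * a m) / (1 - r) = ε * a m / (1 - r) := by field_simp; ring
      rw [pow_succ', mul_assoc]
      linarith
  have h₀ : 0 ≤ ε * a (2 ^ J * n) / (1 - r) := div_nonneg (mul_nonneg hε (ha _)) hr'.le
  linarith [key J]

section Necessity

variable {F : ℝ → ℝ} {α : ℝ} {a b : ℕ → ℝ}

theorem tendsto_natCast_mul_one_sub_of_tendsto_weibull (hF : IsDistFun F) (hα : 0 < α)
    {u : ℕ → ℝ} {x : ℝ} (hx : x < 0) (hu : Tendsto (fun n => F (u n) ^ n) atTop (𝓝 (weibull α x))) :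
    Tendsto (fun n : ℕ => (n : ℝ) * (1 - F (u n))) atTop (𝓝 ((-x) ^ α)) := by
  rw [weibull_of_nonpos hα hx.le] at hu
  exact (tendsto_pow_iff_tendsto_natCast_mul_one_sub fun n => hF.nonneg_s2 _).1 hu

theorem tendsto_doubling_of_weibull (hF : IsDistFun F) (hα : 0 < α) (ha : ∀ n, 0 < a n)
    (hab : ∀ x, Tendsto (fun n => F (a n * x + b n) ^ n) atTop (𝓝 (weibull α x))) :
    Tendsto (fun n => a (2 * n) / a n) atTop (𝓝 (2 ^ (-α⁻¹))) ∧
      Tendsto (fun n => (b (2 * n) - b n) / a n) atTop (𝓝 0) := by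
  set c : ℝ := 2 ^ (-α⁻¹)
  have h2n : Tendsto (fun n : ℕ => 2 * n) atTop atTop := tendsto_id.const_mul_atTop' two_pos
  -- `F(a (2n) x + b (2n)) ^ n` is the square root of `F(a (2n) x + b (2n)) ^ (2n) → Ψ(x)`
  have h (y : ℝ) (hy : y < 0) :
      Tendsto (fun n => (a (2 * n) * y + b (2 * n) - b n) / a n) atTop (𝓝 (c * y)) := by
    refine tendsto_div_sub_of_tendsto_pow hF.1 hF.nonneg_s2 (strictMonoOn_weibull hα) ha hab
      (mul_neg_of_pos_of_neg (by positivity) hy) ?_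
    rw [← sqrt_weibull hα]
    refine ((Real.continuous_sqrt.tendsto _).comp ((hab y).comp h2n)).congr fun n => ?_
    simp only [Function.comp_apply, pow_mul']
    exact Real.sqrt_sq (pow_nonneg (hF.nonneg_s2 _) _)
  have h₁ := h (-1) (by norm_num)
  have h₂ := h (-2) (by norm_num)
  constructor
  · have h₃ := h₁.sub h₂
    rw [show c * -1 - c * -2 = c by ring] at h₃
    exact h₃.congr fun n => by ring
  · have h₃ := (h₁.const_mul 2).sub h₂
    rw [show 2 * (c * -1) - c * -2 = 0 by ring] at h₃
    exact h₃.congr fun n => by ring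

theorem eventually_forall_abs_sub_le_of_weibull (hF : IsDistFun F) (hα : 0 < α)
    (ha : ∀ n, 0 < a n)
    (hab : ∀ x, Tendsto (fun n => F (a n * x + b n) ^ n) atTop (𝓝 (weibull α x)))
    {ε : ℝ} (hε : 0 < ε) : ∀ᶠ n in atTop, ∀ J : ℕ, |b (2 ^ J * n) - b n| ≤ ε * a n := by
  obtain ⟨hA, hB⟩ := tendsto_doubling_of_weibull hF hα ha hab
  have hc : (2 : ℝ) ^ (-α⁻¹) < 1 :=
    Real.rpow_lt_one_of_one_lt_of_neg one_lt_two (neg_neg_of_pos (inv_pos.2 hα))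
  obtain ⟨r, hcr, hr⟩ := exists_between hc
  have hε' : 0 < ε * (1 - r) := mul_pos hε (sub_pos.2 hr)
  obtain ⟨N, hN⟩ := eventually_atTop.1 ((hA.eventually (gt_mem_nhds hcr)).and
    (hB.abs.eventually (gt_mem_nhds (by rwa [abs_zero]))))
  have hdbl : ∀ m ≥ N, a (2 * m) ≤ r * a m ∧ |b (2 * m) - b m| ≤ ε * (1 - r) * a m := by
    intro m hm
    obtain ⟨h₁, h₂⟩ := hN m hm
    rw [abs_div, abs_of_pos (ha m)] at h₂
    exact ⟨((div_lt_iff₀ (ha m)).1 h₁).le, ((div_lt_iff₀ (ha m)).1 h₂).le⟩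
  filter_upwards [eventually_ge_atTop N] with n hn J
  have key := abs_sub_le_of_doubling hr hε'.le (fun n => (ha n).le) hdbl hn J
  rwa [mul_right_comm, mul_div_cancel_right₀ _ (sub_pos.2 hr).ne'] at key

theorem bddAbove_lt_one_of_weibull (hF : IsDistFun F) (hα : 0 < α) (ha : ∀ n, 0 < a n)
    (hab : ∀ x, Tendsto (fun n => F (a n * x + b n) ^ n) atTop (𝓝 (weibull α x))) :
    BddAbove {x | F x < 1} := by
  obtain ⟨N, hN⟩ := eventually_atTop.1
    (eventually_forall_abs_sub_le_of_weibull hF hα ha hab one_pos)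
  refine ⟨b (N + 1) + a (N + 1), fun y (hy : F y < 1) => not_lt.1 fun hlt => ?_⟩
  -- `F(b n) ^ n → Ψ(0) = 1` forces `b n` above every `y` with `F y < 1`
  have hb : ∀ᶠ n in atTop, y < b n := by
    refine eventually_lt_of_tendsto_pow hF.1 hF.nonneg_s2 (u := fun _ => y)
      (tendsto_pow_atTop_nhds_zero_of_lt_one (hF.nonneg_s2 y) hy) (q := 1) ?_ one_pos
    simpa [weibull_of_nonneg] using hab 0
  have hJ : Tendsto (fun J : ℕ => 2 ^ J * (N + 1)) atTop atTop :=
    (tendsto_pow_atTop_atTop_of_one_lt one_lt_two).atTop_mul_const' N.succ_pos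
  obtain ⟨J, hJ⟩ := (hJ.eventually hb).exists
  linarith [le_abs_self (b (2 ^ J * (N + 1)) - b (N + 1)), hN (N + 1) N.le_succ J]

theorem tendsto_scale_center_of_weibull (hF : IsDistFun F) (hα : 0 < α)
    (hab : ∀ x, Tendsto (fun n => F (a n * x + b n) ^ n) atTop (𝓝 (weibull α x)))
    {x₀ : ℝ} (hx₀ : IsLUB {x | F x < 1} x₀) :
    Tendsto a atTop (𝓝 0) ∧ Tendsto b atTop (𝓝 x₀) := by
  have h (x : ℝ) (hx : x < 0) : Tendsto (fun n => a n * x + b n) atTop (𝓝 x₀) := by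
    have h₁ := tendsto_natCast_mul_one_sub_of_tendsto_weibull hF hα hx (hab x)
    refine hF.1.tendsto_of_tendsto_apply_one hx₀ ?_ ?_
    · filter_upwards [h₁.eventually (lt_mem_nhds (Real.rpow_pos_of_pos (neg_pos.2 hx) α))]
        with n hn
      exact sub_pos.1 (pos_of_mul_pos_right hn n.cast_nonneg)
    · simpa using (tendsto_zero_of_tendsto_natCast_mul h₁).const_sub 1
  have h₁ := h (-1) (by norm_num)
  have h₂ := h (-2) (by norm_num)
  constructor
  · have h₃ := h₁.sub h₂
    rw [sub_self] at h₃
    exact h₃.congr fun n => by ring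
  · have h₃ := (h₁.const_mul 2).sub h₂
    rw [show 2 * x₀ - x₀ = x₀ by ring] at h₃
    exact h₃.congr fun n => by ring

theorem eventually_abs_sub_le_of_weibull (hF : IsDistFun F) (hα : 0 < α) (ha : ∀ n, 0 < a n)
    (hab : ∀ x, Tendsto (fun n => F (a n * x + b n) ^ n) atTop (𝓝 (weibull α x)))
    {x₀ : ℝ} (hx₀ : IsLUB {x | F x < 1} x₀) {ε : ℝ} (hε : 0 < ε) :
    ∀ᶠ n in atTop, |x₀ - b n| ≤ ε * a n := by
  have hb := (tendsto_scale_center_of_weibull hF hα hab hx₀).2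
  filter_upwards [eventually_forall_abs_sub_le_of_weibull hF hα ha hab hε,
    eventually_gt_atTop 0] with n hn hn0
  have hJ : Tendsto (fun J : ℕ => 2 ^ J * n) atTop atTop :=
    (tendsto_pow_atTop_atTop_of_one_lt one_lt_two).atTop_mul_const' hn0
  exact le_of_tendsto' ((hb.comp hJ).sub_const (b n)).abs hn

theorem tendsto_natCast_mul_one_sub_sub_mul_of_weibull (hF : IsDistFun F) (hα : 0 < α)
    (ha : ∀ n, 0 < a n)
    (hab : ∀ x, Tendsto (fun n => F (a n * x + b n) ^ n) atTop (𝓝 (weibull α x)))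
    {x₀ : ℝ} (hx₀ : IsLUB {x | F x < 1} x₀) {s : ℝ} (hs : 0 < s) :
    Tendsto (fun n : ℕ => (n : ℝ) * (1 - F (x₀ - a n * s))) atTop (𝓝 (s ^ α)) := by
  have hlim (t : ℝ) (ht : 0 < t) :
      Tendsto (fun n : ℕ => (n : ℝ) * (1 - F (a n * -t + b n))) atTop (𝓝 (t ^ α)) := by
    simpa using tendsto_natCast_mul_one_sub_of_tendsto_weibull hF hα (neg_lt_zero.2 ht) (hab (-t))
  refine tendsto_of_squeeze_family (f := fun t (n : ℕ) => (n : ℝ) * (1 - F (a n * -t + b n)))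
    (φ := fun t => t ^ α) (Real.continuousAt_rpow_const s α (Or.inl hs.ne')) ?_ ?_
  · filter_upwards [Ioo_mem_nhdsLT hs] with t ⟨ht, hts⟩
    refine ⟨hlim t ht, ?_⟩
    filter_upwards [eventually_abs_sub_le_of_weibull hF hα ha hab hx₀ (sub_pos.2 hts)] with n hn
    have hb := (abs_le.1 hn).2
    exact mul_le_mul_of_nonneg_left (sub_le_sub_left (hF.1 (by linarith)) 1) n.cast_nonneg
  · filter_upwards [self_mem_nhdsWithin] with t (hst : s < t)
    refine ⟨hlim t (hs.trans hst), ?_⟩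
    filter_upwards [eventually_abs_sub_le_of_weibull hF hα ha hab hx₀ (sub_pos.2 hst)] with n hn
    have hb := (abs_le.1 hn).1
    exact mul_le_mul_of_nonneg_left (sub_le_sub_left (hF.1 (by linarith)) 1) n.cast_nonneg

theorem IsDistFun.regVary_of_memDomAttr_weibull (hF : IsDistFun F) (hα : 0 < α)
    (h : MemDomAttr F (weibull α)) :
    BddAbove {x | F x < 1} ∧ RegVary (fun x => 1 - F (sSup {x | F x < 1} - 1 / x)) (-α) := by
  obtain ⟨a, b, ha, hab⟩ := h
  replace hab x := hab x (continuous_weibull hα).continuousAt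
  have hbdd := bddAbove_lt_one_of_weibull hF hα ha hab
  have hx₀ := isLUB_csSup hF.nonempty_lt_one hbdd
  refine ⟨hbdd, regVary_of_tendsto_natCast_mul (fun x => hF.1.one_sub_apply_sub_one_div_pos hx₀)
    hF.1.antitoneOn_one_sub_apply_sub_one_div (d := fun n => (a n)⁻¹) ?_ fun x hx => ?_⟩
  · exact Tendsto.inv_tendsto_nhdsGT_zero (tendsto_nhdsWithin_iff.2
      ⟨(tendsto_scale_center_of_weibull hF hα hab hx₀).1, .of_forall ha⟩)
  · have h := tendsto_natCast_mul_one_sub_sub_mul_of_weibull hF hα ha hab hx₀ (inv_pos.2 hx)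
    rw [Real.inv_rpow hx.le, ← Real.rpow_neg hx.le] at h
    refine h.congr fun n => ?_
    field_simp

end Necessity

/-- **Gnedenko's Weibull domain-of-attraction theorem.**  `F ∈ D(Ψ_α)` iff the
upper end-point `x₊ = sup {x | F x < 1}` is finite (the set is bounded above)
and `x ↦ F̄(x₊ - 1/x)` is regularly varying at infinity with index `-α`. -/
theorem gnedenko_weibull (F : ℝ → ℝ) (hF : IsDistFun F) (α : ℝ) (hα : 0 < α) :
    MemDomAttr F (weibull α) ↔
      (BddAbove {x | F x < 1} ∧
        RegVary (fun x => 1 - F (sSup {x | F x < 1} - 1 / x)) (-α)) :=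
  ⟨hF.regVary_of_memDomAttr_weibull hα, fun ⟨hbdd, hrv⟩ =>
    hF.memDomAttr_weibull hα (isLUB_csSup hF.nonempty_lt_one hbdd) hrv⟩
end

section
/- Any auxiliary function in the Gumbel domain criterion is Beurling slowly varying: if F̄ : ℝ → (0,∞) is nonincreasing with F̄(t) → 0 as t → ∞, a : ℝ → (0,∞), and F̄(t + x a(t))/F̄(t) → e^{−x} as t → ∞ for every x ∈ ℝ, then a(t + x a(t))/a(t) → 1 as t → ∞ for every x ∈ ℝ, provided a is taken as a(t) := (∫_t^∞ F̄(u) du)/F̄(t) (assumed finite for all t). -/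
/-!
Write `ψ(t) = ∫_t^∞ F̄`, so that `a = ψ / F̄`. With `s = t + x a(t)`, the substitution
`u = t + y a(t)` gives `ψ(t) - ψ(s) = ψ(t) ∫_0^x F̄(t + y a(t)) / F̄(t) dy`, hence
`a(s) / a(t) = (1 - ∫_0^x F̄(t + y a(t)) / F̄(t) dy) / (F̄(s) / F̄(t))`.
The integrand tends to `e^{-y}` and, by monotonicity, is dominated by its (bounded) value at
`y = min 0 x`; dominated convergence turns the right-hand side into `(1 - (1 - e^{-x})) / e^{-x} = 1`.
-/

open Filter Topology MeasureTheory Set intervalIntegral Real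

lemma integral_Ioi_pos_of_pos {f : ℝ → ℝ} (hf : ∀ u, 0 < f u) {t : ℝ}
    (hint : IntegrableOn f (Ioi t)) : 0 < ∫ u in Ioi t, f u := by
  rw [setIntegral_pos_iff_support_of_nonneg_ae (.of_forall fun u => (hf u).le) hint]
  simp [Function.support, (hf _).ne']

lemma auxiliary_shift_div_eq {f a : ℝ → ℝ} (hf : ∀ u, 0 < f u)
    (hint : ∀ t, IntegrableOn f (Ioi t)) (ha : ∀ t, a t = (∫ u in Ioi t, f u) / f t) (t x : ℝ) :
    a (t + x * a t) / a t =
      (1 - ∫ y in 0..x, f (t + y * a t) / f t) / (f (t + x * a t) / f t) := by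
  set s := t + x * a t
  have hcov : a t * ∫ y in 0..x, f (t + y * a t) = ∫ u in t..s, f u := by
    simpa [mul_comm] using smul_integral_comp_add_mul f (a t) t (a := 0) (b := x)
  have hψs : (∫ u in Ioi t, f u) - ∫ u in Ioi s, f u = a t * ∫ y in 0..x, f (t + y * a t) := by
    rw [integral_Ioi_sub_Ioi' (hint t) (hint s), hcov]
  have hψ : 0 < ∫ u in Ioi t, f u := integral_Ioi_pos_of_pos hf (hint t)
  have := hf t
  have := hf s
  rw [intervalIntegral.integral_div, ha s]
  generalize (∫ y in 0..x, f (t + y * a t)) = I at hψs ⊢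
  rw [ha t] at hψs ⊢
  field_simp at hψs ⊢
  linear_combination -hψs

lemma tendsto_integral_shift_div {f a : ℝ → ℝ} (hf : ∀ u, 0 ≤ f u) (hanti : Antitone f)
    (ha : ∀ t, 0 ≤ a t)
    (hconv : ∀ x, Tendsto (fun t => f (t + x * a t) / f t) atTop (𝓝 (exp (-x)))) (x : ℝ) :
    Tendsto (fun t => ∫ y in 0..x, f (t + y * a t) / f t) atTop (𝓝 (1 - exp (-x))) := by
  have hexp : ∫ y in (0:ℝ)..x, exp (-y) = 1 - exp (-x) := by simp [integral_comp_neg]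
  rw [← hexp]
  set m := min 0 x
  have hbound : ∀ᶠ t in atTop, f (t + m * a t) / f t ≤ exp (-m) + 1 :=
    (hconv m).eventually (ge_mem_nhds (lt_add_one _))
  refine tendsto_integral_filter_of_dominated_convergence (fun _ => exp (-m) + 1)
    (.of_forall fun t => ?_) ?_ intervalIntegrable_const (.of_forall fun y _ => hconv y)
  · exact ((hanti.measurable.comp (by fun_prop)).div_const _).aestronglyMeasurable
  · filter_upwards [hbound] with t ht
    refine .of_forall fun y hy => ?_
    have hmy : m ≤ y := hy.1.le
    rw [Real.norm_of_nonneg (div_nonneg (hf _) (hf _))]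
    exact (div_le_div_of_nonneg_right (hanti (by nlinarith [ha t])) (hf t)).trans ht

theorem auxiliary_is_beurling_slowly_varying_general (Fbar : ℝ → ℝ)
    (hpos : ∀ t, 0 < Fbar t) (hanti : Antitone Fbar)
    (hint : ∀ t : ℝ, IntegrableOn Fbar (Set.Ioi t))
    (a : ℝ → ℝ) (ha : ∀ t, a t = (∫ u in Set.Ioi t, Fbar u) / Fbar t)
    (hconv : ∀ x : ℝ,
      Tendsto (fun t => Fbar (t + x * a t) / Fbar t) atTop (𝓝 (Real.exp (-x)))) :
    ∀ x : ℝ, Tendsto (fun t => a (t + x * a t) / a t) atTop (𝓝 1) := by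
  have ha_nonneg : ∀ t, 0 ≤ a t := fun t => by
    rw [ha t]; exact div_nonneg (integral_Ioi_pos_of_pos hpos (hint t)).le (hpos t).le
  intro x
  have hlim := (tendsto_const_nhds (x := (1 : ℝ)).sub
    (tendsto_integral_shift_div (fun t => (hpos t).le) hanti ha_nonneg hconv x)).div
    (hconv x) (exp_pos _).ne'
  rw [sub_sub_cancel, div_self (exp_pos _).ne'] at hlim
  exact hlim.congr fun t => (auxiliary_shift_div_eq hpos hint ha t x).symm

/-- If `F̄ : ℝ → (0,∞)` is a nonincreasing tail tending to `0` at `∞` with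
integrable tails, and the Gumbel-domain criterion
`F̄(t + x a(t)) / F̄(t) → e^{-x}` holds with the auxiliary function
`a(t) = (∫_t^∞ F̄(u) du) / F̄(t)`, then `a` is Beurling slowly varying:
`a(t + x a(t)) / a(t) → 1` as `t → ∞`, for every `x ∈ ℝ`. -/
theorem auxiliary_is_beurling_slowly_varying (Fbar : ℝ → ℝ)
    (hpos : ∀ t, 0 < Fbar t) (hanti : Antitone Fbar)
    (hlim : Tendsto Fbar atTop (𝓝 0))
    (hint : ∀ t : ℝ, IntegrableOn Fbar (Set.Ioi t))
    (a : ℝ → ℝ) (ha : ∀ t, a t = (∫ u in Set.Ioi t, Fbar u) / Fbar t)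
    (hconv : ∀ x : ℝ,
      Tendsto (fun t => Fbar (t + x * a t) / Fbar t) atTop (𝓝 (Real.exp (-x)))) :
    ∀ x : ℝ, Tendsto (fun t => a (t + x * a t) / a t) atTop (𝓝 1) :=
  auxiliary_is_beurling_slowly_varying_general Fbar hpos hanti hint a ha hconv
end

section
/- Bloom's theorem: If a : ℝ → (0,∞) is continuous and Beurling slowly varying, then a is self-neglecting and a(x)/x → 0 as x → ∞. -/
open Filter Topology

/-- `a : ℝ → (0,∞)` is Beurling slowly varying:
`a(t + x a(t)) / a(t) → 1` as `t → ∞` for each fixed `x`. -/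
def BeurlingSlowlyVarying (a : ℝ → ℝ) : Prop :=
  (∀ t, 0 < a t) ∧
    ∀ x : ℝ, Tendsto (fun t => a (t + x * a t) / a t) atTop (𝓝 1)

/-- `a : ℝ → (0,∞)` is self-neglecting: the Beurling convergence is uniform in
`x` on compact subsets of ℝ. -/
def SelfNeglecting (a : ℝ → ℝ) : Prop :=
  (∀ t, 0 < a t) ∧
    ∀ K : Set ℝ, IsCompact K →
      TendstoUniformlyOn (fun t x => a (t + x * a t) / a t) (fun _ => 1) atTop K

open Set

/-!
Uniformity comes from the Baire category theorem. If it failed on `[m, M]`, the intermediate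
value theorem and compactness would give `tₙ → ∞`, `yₙ → y₀` and a fixed `r ≠ 1` with
`a(sₙ) = r a(tₙ)`, where `sₙ = tₙ + yₙ a(tₙ)` (assumed to tend to `∞`). The continuous ratios
`fₙ(p) = a(tₙ + p a(tₙ)) / a(tₙ)` tend to `1` at every `p`, while, rescaling around `sₙ`,
`fₙ(p + yₙ - y₀) → r` at every `p`. Baire makes both convergences uniform near one point, which
is absurd since `yₙ - y₀ → 0`.

For `yₙ ≥ 0` we have `sₙ ≥ tₙ`, so uniformity holds on `[0, 1]`. Along the orbit
`t_{k+1} = t_k + a(t_k)` this bounds the increments of `a` by `ε` times those of the orbit, so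
`a(x) ≤ C + 2εx` and `a(x)/x → 0`. That makes `sₙ → ∞` for all bounded `yₙ`, hence uniformity
on every compact set.
-/

theorem eq_of_tendsto_of_tendsto_comp_add {G X : Type*} [TopologicalSpace G] [AddGroup G]
    [IsTopologicalAddGroup G] [BaireSpace G] [MetricSpace X] {f : ℕ → G → X}
    (hf : ∀ n, Continuous (f n)) {δ : ℕ → G} (hδ : Tendsto δ atTop (𝓝 0)) {α β : X}
    (hα : ∀ p, Tendsto (fun n => f n p) atTop (𝓝 α))
    (hβ : ∀ p, Tendsto (fun n => f n (p + δ n)) atTop (𝓝 β)) : α = β := by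
  by_contra hne
  have hαβ : 0 < dist α β := dist_pos.2 hne
  set c := dist α β / 3 with hc_def
  have hc : 0 < c := by positivity
  set A : ℕ → Set G := fun N =>
    ⋂ n ≥ N, {p | dist (f n p) α ≤ c} ∩ {p | dist (f n (p + δ n)) β ≤ c}
  have hA_closed (N : ℕ) : IsClosed (A N) :=
    isClosed_biInter fun n _ =>
      (isClosed_le ((hf n).dist continuous_const) continuous_const).inter
        (isClosed_le (((hf n).comp (continuous_add_const _)).dist continuous_const)
          continuous_const)
  have hA_cover : ⋃ N, A N = univ := by
    refine eq_univ_of_forall fun p => ?_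
    obtain ⟨N, hN⟩ := eventually_atTop.1 <|
      ((hα p).eventually (Metric.closedBall_mem_nhds α hc)).and
        ((hβ p).eventually (Metric.closedBall_mem_nhds β hc))
    exact mem_iUnion.2 ⟨N, mem_iInter₂.2 hN⟩
  obtain ⟨N, x, hx⟩ := nonempty_interior_of_iUnion_of_closed hA_closed hA_cover
  -- `x` and, for large `n`, `x - δ n` both lie in `A N`, which forces `f n x` close to `α` and `β`.
  have hshift : ∀ᶠ n in atTop, x - δ n ∈ interior (A N) := by
    have : Tendsto (fun n => x - δ n) atTop (𝓝 x) := by simpa using tendsto_const_nhds.sub hδ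
    exact this.eventually (isOpen_interior.mem_nhds hx)
  obtain ⟨n, hnN, hn⟩ := ((eventually_ge_atTop N).and hshift).exists
  have h₁ : dist (f n x) α ≤ c := (mem_iInter₂.1 (interior_subset hx) n hnN).1
  have h₂ : dist (f n (x - δ n + δ n)) β ≤ c := (mem_iInter₂.1 (interior_subset hn) n hnN).2
  rw [sub_add_cancel] at h₂
  have : dist α β ≤ c + c := dist_triangle_left α β (f n x) |>.trans (add_le_add h₁ h₂)
  linarith

theorem not_bddAbove_range_iterate_add {f : ℝ → ℝ} (hcont : Continuous f)
    (hpos : ∀ x, 0 < f x) (x₀ : ℝ) : ¬BddAbove (range fun k => (fun x => x + f x)^[k] x₀) := by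
  set t := fun k => (fun x => x + f x)^[k] x₀
  have hsucc (k : ℕ) : t (k + 1) = t k + f (t k) := Function.iterate_succ_apply' _ _ _
  have hmono : Monotone t := monotone_nat_of_le_succ fun k => by linarith [hsucc k, hpos (t k)]
  intro hbdd
  have hlim := tendsto_atTop_ciSup hmono hbdd
  -- The steps `f (t k) = t (k + 1) - t k` would tend both to `0` and to `f (⨆ k, t k) > 0`.
  have hstep : Tendsto (fun k => f (t k)) atTop (𝓝 0) := by
    simpa [hsucc] using (hlim.comp (tendsto_add_atTop_nat 1)).sub hlim
  exact (hpos _).ne' (tendsto_nhds_unique ((hcont.tendsto _).comp hlim) hstep)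

theorem apply_le_of_local_growth_le {a : ℝ → ℝ} (hcont : Continuous a) (hpos : ∀ t, 0 < a t)
    {ε T : ℝ} (hε : 0 ≤ ε) (hT : ∀ t ≥ T, ∀ u ∈ Icc (0 : ℝ) 1, a (t + u * a t) ≤ (1 + ε) * a t)
    {x : ℝ} (hx : T ≤ x) : a x ≤ (1 + ε) * (a T + ε * (x - T)) := by
  set t := fun k => (fun x => x + a x)^[k] T
  have hsucc (k : ℕ) : t (k + 1) = t k + a (t k) := Function.iterate_succ_apply' _ _ _
  have hmono : Monotone t := monotone_nat_of_le_succ fun k => by linarith [hsucc k, hpos (t k)]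
  have hge (k : ℕ) : T ≤ t k := hmono (Nat.zero_le k)
  have hjump (k : ℕ) : a (t (k + 1)) ≤ a (t k) + ε * (t (k + 1) - t k) := by
    rw [hsucc k, add_sub_cancel_left]
    linarith [one_mul (a (t k)) ▸ hT (t k) (hge k) 1 (by simp)]
  have horbit (k : ℕ) : a (t k) ≤ a T + ε * (t k - T) := by
    induction k with
    | zero => simp [t]
    | succ k ih => linarith [hjump k, hsucc k]
  have hcover : ⋃ k, Ico (t k) (t (k + 1)) = Ici (t 0) :=
    iUnion_Ico_map_succ_eq_Ici (fun k => hmono (Nat.zero_le k))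
      (not_bddAbove_range_iterate_add hcont hpos T)
  obtain ⟨k, hkx, hxk⟩ := mem_iUnion.1 (hcover ▸ hx : x ∈ ⋃ k, Ico (t k) (t (k + 1)))
  have hak := hpos (t k)
  have hu : (x - t k) / a (t k) ∈ Icc (0 : ℝ) 1 :=
    ⟨div_nonneg (by linarith) hak.le, (div_le_one hak).2 (by linarith [hsucc k])⟩
  calc a x = a (t k + (x - t k) / a (t k) * a (t k)) := by
        rw [div_mul_cancel₀ _ hak.ne', add_sub_cancel]
    _ ≤ (1 + ε) * a (t k) := hT _ (hge k) _ hu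
    _ ≤ (1 + ε) * (a T + ε * (x - T)) := by
        gcongr
        linarith [horbit k, mul_le_mul_of_nonneg_left hkx hε]

theorem tendsto_div_nhds_zero_of_local_growth_le {a : ℝ → ℝ} (hcont : Continuous a)
    (hpos : ∀ t, 0 < a t)
    (hgrowth : ∀ ε > 0, ∀ᶠ t in atTop, ∀ u ∈ Icc (0 : ℝ) 1, a (t + u * a t) ≤ (1 + ε) * a t) :
    Tendsto (fun x => a x / x) atTop (𝓝 0) := by
  refine tendsto_order.2 ⟨fun b hb => (eventually_gt_atTop 0).mono fun x hx =>
    hb.trans (div_pos (hpos x) hx), fun b hb => ?_⟩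
  set ε := min 1 (b / 4)
  have hε : 0 < ε := lt_min one_pos (by positivity)
  obtain ⟨T, hT⟩ := eventually_atTop.1 ((hgrowth ε hε).and (eventually_ge_atTop 0))
  have hT0 : 0 ≤ T := (hT T le_rfl).2
  filter_upwards [eventually_ge_atTop T, eventually_gt_atTop 0,
    eventually_gt_atTop (4 * a T / b)] with x hTx hx hbx
  have hlin := apply_le_of_local_growth_le hcont hpos hε.le (fun t ht => (hT t ht).1) hTx
  have hcoef : (1 + ε) * ε ≤ b / 2 := by
    nlinarith [min_le_left 1 (b / 4), min_le_right 1 (b / 4)]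
  rw [div_lt_iff₀ hx]
  calc a x ≤ (1 + ε) * (a T + ε * (x - T)) := hlin
    _ ≤ 2 * a T + (1 + ε) * ε * x := by
        nlinarith [mul_nonneg (mul_nonneg (by linarith : 0 ≤ 1 + ε) hε.le) hT0, hpos T,
          min_le_left 1 (b / 4)]
    _ ≤ 2 * a T + b / 2 * x := by gcongr
    _ < b * x := by linarith [(div_lt_iff₀ hb).1 hbx]

theorem tendsto_add_mul_atTop_of_tendsto_div {a : ℝ → ℝ}
    (ha : Tendsto (fun x => a x / x) atTop (𝓝 0)) (m M : ℝ) :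
    Tendsto (fun p : ℝ × ℝ => p.1 + p.2 * a p.1) (atTop ×ˢ 𝓟 (Icc m M)) atTop := by
  set C := max |m| |M|
  have hC : 0 < C + 1 := by positivity
  have hsmall : ∀ᶠ x in atTop, 0 < x ∧ |a x| * (C + 1) ≤ x / 2 := by
    have habs : Tendsto (fun x => |a x / x|) atTop (𝓝 0) := by simpa using ha.abs
    filter_upwards [eventually_gt_atTop 0,
      habs.eventually (gt_mem_nhds (by positivity : 0 < 1 / (2 * (C + 1))))]
      with x hx hax
    rw [abs_div, abs_of_pos hx, div_lt_div_iff₀ hx (by positivity)] at hax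
    exact ⟨hx, by linarith⟩
  refine tendsto_atTop_mono' _ ?_ (tendsto_fst.atTop_div_const two_pos)
  filter_upwards [hsmall.prod_mk (eventually_principal.2 fun y hy => hy)]
  rintro ⟨x, y⟩ ⟨⟨hx, hax⟩, hy⟩
  have hyC : |y| ≤ C := abs_le_max_abs_abs hy.1 hy.2
  have : |y * a x| ≤ x / 2 := by
    rw [abs_mul]
    nlinarith [abs_nonneg (a x), abs_nonneg y]
  dsimp only
  linarith [neg_abs_le (y * a x)]

namespace BeurlingSlowlyVarying

variable {a : ℝ → ℝ}

theorem eq_one_of_apply_eq_mul (ha : BeurlingSlowlyVarying a) (hcont : Continuous a)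
    {t y : ℕ → ℝ} {y₀ r : ℝ} (ht : Tendsto t atTop atTop) (hy : Tendsto y atTop (𝓝 y₀))
    (hs : Tendsto (fun n => t n + y n * a (t n)) atTop atTop)
    (hval : ∀ n, a (t n + y n * a (t n)) = r * a (t n)) : r = 1 := by
  obtain ⟨hpos, hlim⟩ := ha
  have hr : r ≠ 0 := by
    rintro rfl
    exact (hpos _).ne' ((hval 0).trans (zero_mul _))
  refine (eq_of_tendsto_of_tendsto_comp_add (δ := fun n => y n - y₀)
    (f := fun n p => a (t n + p * a (t n)) / a (t n)) (fun n => by fun_prop)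
    (by simpa using hy.sub_const y₀) (fun p => (hlim p).comp ht) fun p => ?_).symm
  -- Rescaling around `s n = t n + y n * a (t n)` turns the shifted ratio into a Beurling ratio
  -- at `s n`, times `a (s n) / a (t n) = r`.
  have hshift (n : ℕ) : a (t n + (p + (y n - y₀)) * a (t n)) / a (t n) =
      a (t n + y n * a (t n) + (p - y₀) / r * a (t n + y n * a (t n))) /
        a (t n + y n * a (t n)) * r := by
    have := (hpos (t n)).ne'
    rw [hval n]
    field_simp
    ring_nf
  simpa [hshift] using ((hlim ((p - y₀) / r)).comp hs).mul_const r

theorem not_frequently_apply_eq_mul (ha : BeurlingSlowlyVarying a) (hcont : Continuous a)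
    {m M r : ℝ} (hr : r ≠ 1)
    (hgrow : Tendsto (fun p : ℝ × ℝ => p.1 + p.2 * a p.1) (atTop ×ˢ 𝓟 (Icc m M)) atTop) :
    ¬∃ᶠ t in atTop, ∃ u ∈ Icc m M, a (t + u * a t) = r * a t := by
  intro hfreq
  choose t ht u hu hval using fun n : ℕ => frequently_atTop.1 hfreq n
  obtain ⟨y₀, -, φ, hφ, hy⟩ := isCompact_Icc.tendsto_subseq hu
  have htφ : Tendsto (t ∘ φ) atTop atTop :=
    (tendsto_atTop_mono ht tendsto_natCast_atTop_atTop).comp hφ.tendsto_atTop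
  have hsφ := hgrow.comp (htφ.prodMk (tendsto_principal.2 (.of_forall fun n => hu (φ n))))
  exact hr (ha.eq_one_of_apply_eq_mul hcont htφ hy hsφ fun n => hval (φ n))

theorem tendstoUniformlyOn_Icc (ha : BeurlingSlowlyVarying a) (hcont : Continuous a)
    {m M : ℝ} (hm : m ≤ 0) (hM : 0 ≤ M)
    (hgrow : Tendsto (fun p : ℝ × ℝ => p.1 + p.2 * a p.1) (atTop ×ˢ 𝓟 (Icc m M)) atTop) :
    TendstoUniformlyOn (fun t x => a (t + x * a t) / a t) (fun _ => 1) atTop (Icc m M) := by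
  have hivt {t x v : ℝ} (hx : x ∈ Icc m M) (hv : v ∈ uIcc 1 (a (t + x * a t) / a t)) :
      ∃ u ∈ Icc m M, a (t + u * a t) = v * a t := by
    have hcont_ratio : Continuous fun u => a (t + u * a t) / a t := by fun_prop
    obtain ⟨u, hu, huv⟩ := intermediate_value_uIcc (a := 0) hcont_ratio.continuousOn
      (by simpa [div_self (ha.1 t).ne'] using hv)
    exact ⟨u, uIcc_subset_Icc ⟨hm, hM⟩ hx hu, (div_eq_iff (ha.1 t).ne').1 huv⟩
  rw [Metric.tendstoUniformlyOn_iff]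
  intro ε hε
  by_contra hfreq
  have hfar : ∃ᶠ t in atTop, (∃ x ∈ Icc m M, 1 + ε ≤ a (t + x * a t) / a t) ∨
      ∃ x ∈ Icc m M, a (t + x * a t) / a t ≤ 1 - ε := by
    refine (not_eventually.1 hfreq).mono fun t ht => ?_
    push Not at ht
    obtain ⟨x, hx, hdist⟩ := ht
    rw [Real.dist_eq, abs_sub_comm, le_abs] at hdist
    exact hdist.imp (fun h => ⟨x, hx, by linarith⟩) fun h => ⟨x, hx, by linarith⟩
  rcases frequently_or_distrib.1 hfar with hup | hdown
  · refine ha.not_frequently_apply_eq_mul hcont (r := 1 + ε) (by linarith) hgrow ?_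
    exact hup.mono fun t ⟨x, hx, hxt⟩ => hivt hx (mem_uIcc.2 (.inl ⟨by linarith, hxt⟩))
  · refine ha.not_frequently_apply_eq_mul hcont (r := 1 - ε) (by linarith) hgrow ?_
    exact hdown.mono fun t ⟨x, hx, hxt⟩ => hivt hx (mem_uIcc.2 (.inr ⟨hxt, by linarith⟩))

theorem tendsto_div_nhds_zero (ha : BeurlingSlowlyVarying a) (hcont : Continuous a) :
    Tendsto (fun x => a x / x) atTop (𝓝 0) := by
  have hgrow : Tendsto (fun p : ℝ × ℝ => p.1 + p.2 * a p.1) (atTop ×ˢ 𝓟 (Icc 0 1)) atTop := by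
    refine tendsto_atTop_mono' _ ?_ tendsto_fst
    exact ((eventually_principal.2 fun y hy => hy).prod_inr atTop).mono fun p hp =>
      le_add_of_nonneg_right (mul_nonneg hp.1 (ha.1 _).le)
  have hunif := Metric.tendstoUniformlyOn_iff.1 <|
    ha.tendstoUniformlyOn_Icc hcont le_rfl zero_le_one hgrow
  refine tendsto_div_nhds_zero_of_local_growth_le hcont ha.1 fun ε hε => ?_
  filter_upwards [hunif ε hε] with t ht u hu
  have hratio : a (t + u * a t) / a t < 1 + ε := by
    linarith [(abs_sub_lt_iff.1 (Real.dist_eq _ _ ▸ ht u hu)).2]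
  exact ((div_lt_iff₀ (ha.1 t)).1 hratio).le

theorem selfNeglecting (ha : BeurlingSlowlyVarying a) (hcont : Continuous a) :
    SelfNeglecting a := by
  refine ⟨ha.1, fun K hK => ?_⟩
  have hgrow := tendsto_add_mul_atTop_of_tendsto_div (ha.tendsto_div_nhds_zero hcont)
    (min (sInf K) 0) (max (sSup K) 0)
  refine (ha.tendstoUniformlyOn_Icc hcont (min_le_right _ _) (le_max_right _ _) hgrow).mono ?_
  exact hK.isBounded.subset_Icc_sInf_sSup.trans (Icc_subset_Icc (min_le_left _ _) (le_max_left _ _))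

end BeurlingSlowlyVarying

/-- **Bloom's theorem.**  A continuous Beurling slowly varying function is
self-neglecting, and satisfies `a(x)/x → 0` as `x → ∞`. -/
theorem bloom (a : ℝ → ℝ) (hcont : Continuous a)
    (hBSV : BeurlingSlowlyVarying a) :
    SelfNeglecting a ∧ Tendsto (fun x => a x / x) atTop (𝓝 0) :=
  ⟨hBSV.selfNeglecting hcont, hBSV.tendsto_div_nhds_zero hcont⟩
end

section
/- Von Mises condition for the Fréchet domain: Let F be a distribution function with upper end-point x₊ = ∞, differentiable with derivative f (its density) and with F̄(x) > 0 for all x. If the scaled hazard rate satisfies x f(x)/F̄(x) → α as x → ∞ for some α > 0, then F ∈ D(Φ_α). -/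
open Filter Topology

open Set

/-! With `H := -log F̄`, the hypothesis says `t H'(t) → α`, so by the mean value theorem applied to
`s ↦ H (exp s)` the tail is regularly varying: `F̄(t x) / F̄(t) → x ^ (-α)`. Normalising by `a n`
with `F̄(a n) = 1 / n` then gives `n F̄(a n x) → x ^ (-α)`, and `F(a n x) ^ n = (1 - F̄(a n x)) ^ n`
tends to `exp (-x ^ (-α))`. -/

lemma tendsto_add_const_sub_of_tendsto_deriv_of_pos {K k : ℝ → ℝ} {β c : ℝ}
    (hK : ∀ s, HasDerivAt K (k s) s) (hk : Tendsto k atTop (𝓝 β)) (hc : 0 < c) :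
    Tendsto (fun s => K (s + c) - K s) atTop (𝓝 (β * c)) := by
  have hmvt (s : ℝ) : ∃ ξ ∈ Ioo s (s + c), k ξ = (K (s + c) - K s) / (s + c - s) :=
    exists_hasDerivAt_eq_slope K k (by linarith)
      (fun x _ => (hK x).continuousAt.continuousWithinAt) (fun x _ => hK x)
  choose ξ hξ hslope using hmvt
  have hξ_top : Tendsto ξ atTop atTop := tendsto_atTop_mono (fun s => (hξ s).1.le) tendsto_id
  refine ((hk.comp hξ_top).mul_const c).congr fun s => ?_
  rw [Function.comp_apply, hslope, add_sub_cancel_left, div_mul_cancel₀ _ hc.ne']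

lemma tendsto_add_const_sub_of_tendsto_deriv {K k : ℝ → ℝ} {β : ℝ}
    (hK : ∀ s, HasDerivAt K (k s) s) (hk : Tendsto k atTop (𝓝 β)) (c : ℝ) :
    Tendsto (fun s => K (s + c) - K s) atTop (𝓝 (β * c)) := by
  rcases lt_trichotomy c 0 with hc | rfl | hc
  · have h := ((tendsto_add_const_sub_of_tendsto_deriv_of_pos hK hk (neg_pos.2 hc)).comp
      (tendsto_atTop_add_const_right _ c tendsto_id)).neg
    simpa [Function.comp_def] using h
  · simp
  · exact tendsto_add_const_sub_of_tendsto_deriv_of_pos hK hk hc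

lemma tendsto_comp_mul_sub_of_tendsto_mul_deriv {G g : ℝ → ℝ} {β x : ℝ}
    (hG : ∀ t, 0 < t → HasDerivAt G (g t) t)
    (hg : Tendsto (fun t => t * g t) atTop (𝓝 β)) (hx : 0 < x) :
    Tendsto (fun t => G (t * x) - G t) atTop (𝓝 (β * Real.log x)) := by
  have hK (s : ℝ) : HasDerivAt (fun s => G (Real.exp s)) (Real.exp s * g (Real.exp s)) s :=
    ((hG _ (Real.exp_pos s)).comp s (Real.hasDerivAt_exp s)).congr_deriv (mul_comm _ _)
  refine ((tendsto_add_const_sub_of_tendsto_deriv hK (hg.comp Real.tendsto_exp_atTop) _).comp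
    Real.tendsto_log_atTop).congr' ?_
  filter_upwards [eventually_gt_atTop 0] with t ht
  simp [Real.exp_add, Real.exp_log ht, Real.exp_log hx]

lemma tendsto_tail_div_tail {F f : ℝ → ℝ} {α x : ℝ} (hlt : ∀ x, F x < 1)
    (hF : ∀ x, HasDerivAt F (f x) x)
    (hlim : Tendsto (fun x => x * f x / (1 - F x)) atTop (𝓝 α)) (hx : 0 < x) :
    Tendsto (fun t => (1 - F (t * x)) / (1 - F t)) atTop (𝓝 (x ^ (-α))) := by
  have htail (t : ℝ) : 0 < 1 - F t := sub_pos.2 (hlt t)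
  have hlog (t : ℝ) : HasDerivAt (fun t => Real.log (1 - F t)) (-f t / (1 - F t)) t :=
    ((hF t).const_sub 1).log (htail t).ne'
  have hdiff := tendsto_comp_mul_sub_of_tendsto_mul_deriv (fun t _ => hlog t)
    (hlim.neg.congr fun t => by ring) hx
  rw [Real.rpow_def_of_pos hx, mul_comm]
  refine ((Real.continuous_exp.tendsto _).comp hdiff).congr fun t => ?_
  simp [Real.exp_sub, Real.exp_log (htail _)]

lemma exists_tendsto_atTop_tail_eq_inv {F : ℝ → ℝ} (hmono : Monotone F) (hcont : Continuous F)
    (htop : Tendsto F atTop (𝓝 1)) (hlt : ∀ x, F x < 1) :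
    ∃ a : ℕ → ℝ, (∀ n, 0 < a n) ∧ Tendsto a atTop atTop ∧
      ∀ᶠ n : ℕ in atTop, 1 - F (a n) = (n : ℝ)⁻¹ := by
  have hsurj : Ico (F 1) 1 ⊆ F '' Ici 1 :=
    isPreconnected_Ici.intermediate_value_Ico self_mem_Ici
      (le_principal_iff.2 (Ici_mem_atTop 1)) hcont.continuousOn htop
  have hlevel : Tendsto (fun n : ℕ => 1 - (n : ℝ)⁻¹) atTop (𝓝 1) := by
    simpa using (tendsto_inv_atTop_nhds_zero_nat (𝕜 := ℝ)).const_sub 1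
  obtain ⟨q, hq⟩ : ∃ q : ℕ → ℝ, ∀ᶠ n in atTop, q n ∈ Ici 1 ∧ F (q n) = 1 - (n : ℝ)⁻¹ := by
    have hex : ∀ᶠ n : ℕ in atTop, ∃ y, y ∈ Ici 1 ∧ F y = 1 - (n : ℝ)⁻¹ := by
      filter_upwards [hlevel.eventually_const_le (hlt 1), eventually_gt_atTop 0] with n h1 h0
      exact hsurj ⟨h1, sub_lt_self _ (by positivity)⟩
    exact hex.choice
  have hmax : ∀ᶠ n in atTop, max 1 (q n) = q n := hq.mono fun n hn => max_eq_right hn.1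
  have hFa : Tendsto (fun n => F (max 1 (q n))) atTop (𝓝 1) := by
    refine hlevel.congr' ?_
    filter_upwards [hq, hmax] with n hn hn'
    rw [hn', hn.2]
  refine ⟨fun n => max 1 (q n), fun n => one_pos.trans_le (le_max_left _ _), ?_, ?_⟩
  · exact tendsto_atTop.2 fun M =>
      (hFa.eventually_const_lt (hlt M)).mono fun n hn => (hmono.reflect_lt hn).le
  · filter_upwards [hq, hmax] with n hn hn'
    rw [hn', hn.2, sub_sub_cancel]

lemma tendsto_pow_of_tendsto_nat_mul_one_sub {p : ℕ → ℝ} {c : ℝ}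
    (h : Tendsto (fun n : ℕ => n * (1 - p n)) atTop (𝓝 c)) :
    Tendsto (fun n => p n ^ n) atTop (𝓝 (Real.exp (-c))) := by
  simpa using Real.tendsto_one_add_pow_exp_of_tendsto (g := fun n => p n - 1)
    (h.neg.congr fun n => by ring)

lemma IsDistFun.nonneg_s7 {F : ℝ → ℝ} (hF : IsDistFun F) (x : ℝ) : 0 ≤ F x :=
  le_of_tendsto hF.2.2.1 ((eventually_le_atBot x).mono fun _ hy => hF.1 hy)

lemma IsDistFun.tendsto_pow_of_nonpos {F : ℝ → ℝ} (hF : IsDistFun F) (h0 : F 0 < 1)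
    {y : ℕ → ℝ} (hy : ∀ n, y n ≤ 0) : Tendsto (fun n => F (y n) ^ n) atTop (𝓝 0) :=
  squeeze_zero (fun n => pow_nonneg (hF.nonneg_s7 _) n)
    (fun n => pow_le_pow_left₀ (hF.nonneg_s7 _) (hF.1 (hy n)) n)
    (tendsto_pow_atTop_nhds_zero_of_lt_one (hF.nonneg_s7 0) h0)

theorem vonMises_frechet_general (F f : ℝ → ℝ) (hF : IsDistFun F)
    (hxp : ∀ x, F x < 1)
    (hderiv : ∀ x, HasDerivAt F (f x) x)
    (α : ℝ)
    (hlim : Tendsto (fun x => x * f x / (1 - F x)) atTop (𝓝 α)) :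
    MemDomAttr F (frechet α) := by
  obtain ⟨a, ha_pos, ha_top, ha_tail⟩ := exists_tendsto_atTop_tail_eq_inv hF.1
    (continuous_iff_continuousAt.2 fun x => (hderiv x).continuousAt) hF.2.2.2 hxp
  refine ⟨a, fun _ => 0, ha_pos, fun x _ => ?_⟩
  simp only [add_zero]
  rcases le_or_gt x 0 with hx | hx
  · rw [frechet, if_neg hx.not_gt]
    exact hF.tendsto_pow_of_nonpos (hxp 0) fun n =>
      mul_nonpos_of_nonneg_of_nonpos (ha_pos n).le hx
  · rw [frechet, if_pos hx]
    refine tendsto_pow_of_tendsto_nat_mul_one_sub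
      (((tendsto_tail_div_tail hxp hderiv hlim hx).comp ha_top).congr' ?_)
    filter_upwards [ha_tail] with n hn
    rw [Function.comp_apply, hn, div_inv_eq_mul, mul_comm]

/-- **Von Mises condition for the Fréchet domain.**  Let `F` be a distribution
function with upper end-point `x₊ = ∞` (i.e. `F < 1` everywhere, so the tail
`F̄ > 0` everywhere), differentiable with density `f`.  If the scaled hazard
rate satisfies `x f(x) / F̄(x) → α > 0` as `x → ∞`, then `F ∈ D(Φ_α)`. -/
theorem vonMises_frechet (F f : ℝ → ℝ) (hF : IsDistFun F)
    (hxp : ∀ x, F x < 1)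
    (hderiv : ∀ x, HasDerivAt F (f x) x)
    (α : ℝ) (hα : 0 < α)
    (hlim : Tendsto (fun x => x * f x / (1 - F x)) atTop (𝓝 α)) :
    MemDomAttr F (frechet α) :=
  vonMises_frechet_general F f hF hxp hderiv α hlim
end

section
/- Von Mises condition for the Weibull domain: Let F be a distribution function with finite upper end-point x₊ < ∞, differentiable on (−∞, x₊) with derivative f (its density) and with F̄(x) > 0 for x < x₊. If (x₊ − x) f(x)/F̄(x) → α as x ↑ x₊ for some α > 0, then F ∈ D(Ψ_α). -/
open Filter Topology

open Real

/-!
In logarithmic coordinates `ψ(s) = log F̄(x₊ - eˢ)` the von Mises condition says `ψ'(s) → α` as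
`s → -∞`. By the mean value theorem `ψ(s + h) - ψ(s) → α h`, i.e. the tail is regularly varying
at `x₊`: `F̄(x₊ - λt) / F̄(x₊ - t) → λ^α` as `t ↓ 0`. Since `α > 0` also `ψ → -∞`, so `F` has no
atom at `x₊` and there are `aₙ → 0` with `F̄(x₊ - aₙ) = 1/n`. With `bₙ = x₊` this gives
`n F̄(aₙ x + x₊) → (-x)^α` for `x < 0`, hence `F(aₙ x + x₊)ⁿ → exp(-(-x)^α)`; for `x ≥ 0` the
point `aₙ x + x₊` lies beyond `x₊`, where `F = 1`.
-/

lemma IsDistFun.le_one_s8 {F : ℝ → ℝ} (hF : IsDistFun F) (y : ℝ) : F y ≤ 1 :=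
  ge_of_tendsto hF.2.2.2 ((eventually_ge_atTop y).mono fun _ hz => hF.1 hz)

section DerivTendstoAtBot

variable {ψ ψ' : ℝ → ℝ} {α : ℝ}

lemma exists_abs_sub_sub_mul_le_of_tendsto_deriv_atBot (hψ : ∀ u, HasDerivAt ψ (ψ' u) u)
    (hlim : Tendsto ψ' atBot (𝓝 α)) {ε : ℝ} (hε : 0 < ε) :
    ∃ S, ∀ s ≤ S, ∀ t ≤ S, |ψ t - ψ s - α * (t - s)| ≤ ε * |t - s| := by
  obtain ⟨S, hS⟩ := eventually_atBot.1 (hlim (Metric.closedBall_mem_nhds α hε))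
  refine ⟨S, fun s hs t ht => ?_⟩
  have hderiv : ∀ u, HasDerivAt (fun u => ψ u - α * u) (ψ' u - α) u := fun u =>
    (hψ u).sub (by simpa using (hasDerivAt_id u).const_mul α)
  have := (convex_Iic S).norm_image_sub_le_of_norm_hasDerivWithin_le
    (fun u _ => (hderiv u).hasDerivWithinAt) hS hs ht
  simpa only [Real.norm_eq_abs, mul_sub, sub_sub_sub_comm] using this

lemma tendsto_add_sub_of_tendsto_deriv_atBot (hψ : ∀ u, HasDerivAt ψ (ψ' u) u)
    (hlim : Tendsto ψ' atBot (𝓝 α)) (h : ℝ) :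
    Tendsto (fun s => ψ (s + h) - ψ s) atBot (𝓝 (α * h)) := by
  rw [Metric.tendsto_nhds]
  intro ε hε
  have hpos : 0 < |h| + 1 := by positivity
  obtain ⟨S, hS⟩ :=
    exists_abs_sub_sub_mul_le_of_tendsto_deriv_atBot hψ hlim (div_pos hε hpos)
  filter_upwards [eventually_le_atBot (S - |h|)] with s hs
  have hbound := hS s (by linarith [abs_nonneg h]) (s + h) (by linarith [le_abs_self h])
  rw [add_sub_cancel_left] at hbound
  calc dist (ψ (s + h) - ψ s) (α * h) = |ψ (s + h) - ψ s - α * h| := Real.dist_eq _ _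
    _ ≤ ε / (|h| + 1) * |h| := hbound
    _ < ε := by
      rw [div_mul_eq_mul_div, div_lt_iff₀ hpos]
      nlinarith

lemma tendsto_atBot_of_tendsto_deriv_atBot (hψ : ∀ u, HasDerivAt ψ (ψ' u) u)
    (hlim : Tendsto ψ' atBot (𝓝 α)) (hα : 0 < α) : Tendsto ψ atBot atBot := by
  obtain ⟨S, hS⟩ := exists_abs_sub_sub_mul_le_of_tendsto_deriv_atBot hψ hlim (half_pos hα)
  have hlin : Tendsto (fun s => ψ S + α / 2 * (s - S)) atBot atBot :=
    tendsto_atBot_add_const_left _ _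
      ((tendsto_atBot_add_const_right _ (-S) tendsto_id).const_mul_atBot (half_pos hα))
  refine tendsto_atBot_mono' _ ?_ hlin
  filter_upwards [eventually_le_atBot S] with s hs
  have hbound := (abs_le.1 (hS S le_rfl s hs)).2
  rw [abs_of_nonpos (sub_nonpos.2 hs)] at hbound
  linarith

end DerivTendstoAtBot

lemma exists_seq_tendsto_atBot_eventually_eq {ψ : ℝ → ℝ} (hcont : Continuous ψ)
    (hmono : Monotone ψ) (hbot : Tendsto ψ atBot atBot) {u : ℕ → ℝ}
    (hu : Tendsto u atTop atBot) :
    ∃ s : ℕ → ℝ, Tendsto s atTop atBot ∧ ∀ᶠ n in atTop, ψ (s n) = u n := by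
  have hsurj : ∀ y ≤ ψ 0, ∃ s, ψ s = y := by
    intro y hy
    obtain ⟨s₀, hψs₀, hs₀⟩ :=
      ((hbot.eventually (eventually_le_atBot y)).and (eventually_le_atBot 0)).exists
    exact (intermediate_value_Icc hs₀ hcont.continuousOn ⟨hψs₀, hy⟩).imp fun _ h => h.2
  choose! s hs using hsurj
  have hu₀ := hu.eventually (eventually_le_atBot (ψ 0))
  refine ⟨s ∘ u, tendsto_atBot.2 fun S => ?_, hu₀.mono fun n hn => hs _ hn⟩
  filter_upwards [hu.eventually (eventually_lt_atBot (ψ S)), hu₀] with n hn hn₀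
  exact (hmono.reflect_lt ((hs _ hn₀).trans_lt hn)).le

lemma tendsto_one_sub_exp_pow {ψ : ℝ → ℝ} {s : ℕ → ℝ} {h L : ℝ}
    (hψs : ∀ᶠ n in atTop, ψ (s n) = -log n)
    (hlim : Tendsto (fun n => ψ (s n + h) - ψ (s n)) atTop (𝓝 L)) :
    Tendsto (fun n => (1 - exp (ψ (s n + h))) ^ n) atTop (𝓝 (exp (-exp L))) := by
  have hmul : Tendsto (fun n : ℕ => n * -exp (ψ (s n + h))) atTop (𝓝 (-exp L)) := by
    refine (continuous_exp.tendsto L |>.comp hlim).neg.congr' ?_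
    filter_upwards [hψs, eventually_gt_atTop 0] with n hn hn₀
    rw [Function.comp_apply, exp_sub, hn, exp_neg, exp_log (by exact_mod_cast hn₀), div_inv_eq_mul]
    ring
  simpa only [← sub_eq_add_neg] using Real.tendsto_one_add_pow_exp_of_tendsto hmul

section LogTail

variable {F f : ℝ → ℝ} {xp : ℝ}

noncomputable def logTail (F : ℝ → ℝ) (xp s : ℝ) : ℝ := log (1 - F (xp - exp s))

lemma exp_logTail (htail : ∀ x < xp, F x < 1) (s : ℝ) :
    exp (logTail F xp s) = 1 - F (xp - exp s) :=
  exp_log (sub_pos.2 (htail _ (sub_lt_self _ (exp_pos s))))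

lemma monotone_logTail (hF : Monotone F) (htail : ∀ x < xp, F x < 1) :
    Monotone (logTail F xp) := fun s _ hst =>
  log_le_log (sub_pos.2 (htail _ (sub_lt_self _ (exp_pos s))))
    (sub_le_sub_left (hF (sub_le_sub_left (exp_le_exp.2 hst) xp)) 1)

lemma hasDerivAt_logTail (hderiv : ∀ x < xp, HasDerivAt F (f x) x)
    (htail : ∀ x < xp, F x < 1) (s : ℝ) :
    HasDerivAt (logTail F xp) (exp s * f (xp - exp s) / (1 - F (xp - exp s))) s := by
  have hx : xp - exp s < xp := sub_lt_self _ (exp_pos s)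
  have hG : HasDerivAt (fun s => 1 - F (xp - exp s)) (exp s * f (xp - exp s)) s := by
    simpa [mul_comm] using ((hderiv _ hx).comp s ((hasDerivAt_exp s).const_sub xp)).const_sub 1
  exact hG.log (sub_pos.2 (htail _ hx)).ne'

lemma tendsto_deriv_logTail
    (hlim : Tendsto (fun x => (xp - x) * f x / (1 - F x)) (𝓝[<] xp) (𝓝 α)) :
    Tendsto (fun s => exp s * f (xp - exp s) / (1 - F (xp - exp s))) atBot (𝓝 α) := by
  have hx : Tendsto (fun s => xp - exp s) atBot (𝓝[<] xp) := by
    refine tendsto_nhdsWithin_iff.2 ⟨?_, Eventually.of_forall fun s => sub_lt_self _ (exp_pos s)⟩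
    simpa using (tendsto_exp_atBot.const_sub xp)
  simpa only [Function.comp_def, sub_sub_cancel] using hlim.comp hx

lemma IsDistFun.eq_one_of_tendsto_logTail (hF : IsDistFun F) (htail : ∀ x < xp, F x < 1)
    (hbot : Tendsto (logTail F xp) atBot atBot) {y : ℝ} (hy : xp ≤ y) : F y = 1 := by
  have hFy : Tendsto (fun s => 1 - exp (logTail F xp s)) atBot (𝓝 1) := by
    simpa using (tendsto_exp_atBot.comp hbot).const_sub 1
  refine le_antisymm (hF.le_one_s8 y) (le_of_tendsto hFy (Eventually.of_forall fun s => ?_))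
  rw [exp_logTail htail, sub_sub_cancel]
  exact hF.1 (by linarith [exp_pos s])

end LogTail

theorem vonMises_weibull_general (F f : ℝ → ℝ) (hF : IsDistFun F)
    (xp : ℝ)
    (hderiv : ∀ x < xp, HasDerivAt F (f x) x)
    (htail : ∀ x < xp, F x < 1)
    (α : ℝ) (hα : 0 < α)
    (hlim : Tendsto (fun x => (xp - x) * f x / (1 - F x)) (𝓝[<] xp) (𝓝 α)) :
    MemDomAttr F (weibull α) := by
  have hψ := hasDerivAt_logTail hderiv htail
  have hψ' := tendsto_deriv_logTail hlim
  have hψbot := tendsto_atBot_of_tendsto_deriv_atBot hψ hψ' hα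
  obtain ⟨s, hs, hψs⟩ := exists_seq_tendsto_atBot_eventually_eq
    (continuous_iff_continuousAt.2 fun s => (hψ s).continuousAt) (monotone_logTail hF.1 htail)
    hψbot (tendsto_neg_atTop_atBot.comp (tendsto_log_atTop.comp tendsto_natCast_atTop_atTop))
  refine ⟨fun n => exp (s n), fun _ => xp, fun n => exp_pos _, fun x _ => ?_⟩
  rcases lt_or_ge x 0 with hx | hx
  · have hmain := tendsto_one_sub_exp_pow hψs
      ((tendsto_add_sub_of_tendsto_deriv_atBot hψ hψ' (log (-x))).comp hs)
    rw [weibull, if_pos hx, rpow_def_of_pos (neg_pos.2 hx), mul_comm]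
    refine hmain.congr fun n => ?_
    rw [exp_logTail htail, exp_add, exp_log (neg_pos.2 hx), sub_sub_cancel, mul_neg,
      sub_neg_eq_add, add_comm]
  · have hF_one : ∀ n, F (exp (s n) * x + xp) = 1 := fun n =>
      hF.eq_one_of_tendsto_logTail htail hψbot (le_add_of_nonneg_left (by positivity))
    simp only [weibull, hx.not_gt, if_false, hF_one, one_pow, tendsto_const_nhds]

/-- **Von Mises condition for the Weibull domain.**  Let `F` be a distribution
function with finite upper end-point `xp` (the least upper bound of
`{x | F x < 1}`), differentiable on `(-∞, xp)` with density `f` and tail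
`F̄ > 0` there.  If `(xp - x) f(x) / F̄(x) → α > 0` as `x ↑ xp`, then
`F ∈ D(Ψ_α)`. -/
theorem vonMises_weibull (F f : ℝ → ℝ) (hF : IsDistFun F)
    (xp : ℝ) (hxp : IsLUB {x | F x < 1} xp)
    (hderiv : ∀ x < xp, HasDerivAt F (f x) x)
    (htail : ∀ x < xp, F x < 1)
    (α : ℝ) (hα : 0 < α)
    (hlim : Tendsto (fun x => (xp - x) * f x / (1 - F x)) (𝓝[<] xp) (𝓝 α)) :
    MemDomAttr F (weibull α) :=
  vonMises_weibull_general F f hF xp hderiv htail α hα hlim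
end

section
/- Von Mises condition for the Gumbel domain: Let F be a distribution function with upper end-point x₊ = ∞, differentiable with derivative f (its density), with f(x) > 0 and F̄(x) > 0 on a neighbourhood of ∞. If the inverse hazard function i(x) := F̄(x)/f(x) is differentiable there with i′(x) → 0 as x → ∞, then F ∈ D(Λ). -/
open Filter Topology

/-! With `i = F̄ / f` and `h = -log F̄` we have `h' = 1 / i`. Since `i' → 0`, the function `i` is
self-neglecting, `i (b + i b * s) ~ i b` uniformly for bounded `s`, so the mean value theorem gives
`h (b + i b * x) - h b → x`, that is `F̄ (b + i b * x) / F̄ b → exp (-x)`. Choosing `bₙ` with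
`n * F̄ bₙ → 1` and `aₙ = i bₙ` then yields `n * F̄ (aₙ * x + bₙ) → exp (-x)`, hence
`F (aₙ * x + bₙ) ^ n → exp (-exp (-x))`. -/

open Set Real

section SelfNeglecting

variable {i i' : ℝ → ℝ} {x₀ : ℝ}

/-- A function with `i' → 0` is self-neglecting: `i (b + i b * s) / i b → 1` locally
uniformly in `s`. -/
lemma eventually_abs_sub_le_of_tendsto_deriv (hpos : ∀ x ≥ x₀, 0 < i x)
    (hderiv : ∀ x ≥ x₀, HasDerivAt i (i' x) x) (hlim : Tendsto i' atTop (𝓝 0))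
    {X δ : ℝ} (hX : 0 ≤ X) (hδ : 0 < δ) :
    ∀ᶠ b in atTop, ∀ s, |s| ≤ X →
      x₀ ≤ b + i b * s ∧ |i (b + i b * s) - i b| ≤ δ * i b := by
  set η := min (1 / 2) δ / (X + 1)
  have hη : 0 < η := by positivity
  have hηX : η * X ≤ min (1 / 2) δ := by
    calc η * X ≤ η * (X + 1) := by gcongr; linarith
      _ = min (1 / 2) δ := div_mul_cancel₀ _ (by positivity)
  obtain ⟨x₁, hx₁⟩ : ∃ x₁, ∀ t ≥ x₁, x₀ ≤ t ∧ |i' t| ≤ η := by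
    refine ((eventually_ge_atTop x₀).and ?_).exists_forall_of_atTop
    simpa [Real.dist_eq] using hlim.eventually (Metric.closedBall_mem_nhds 0 hη)
  have hlip : ∀ p ≥ x₁, ∀ q ≥ x₁, |i q - i p| ≤ η * |q - p| := fun p hp q hq =>
    (convex_Ici x₁).norm_image_sub_le_of_norm_hasDerivWithin_le
      (fun t ht => (hderiv t (hx₁ t ht).1).hasDerivWithinAt) (fun t ht => (hx₁ t ht).2) hp hq
  have hix₁ := hpos x₁ (hx₁ x₁ le_rfl).1
  filter_upwards [eventually_ge_atTop (x₁ + 2 * X * i x₁)] with b hb s hs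
  have hbx₁ : x₁ ≤ b := by nlinarith
  have hib := hpos b (hx₁ b hbx₁).1
  -- `i` grows sublinearly, so the window `|t - b| ≤ X * i b` stays to the right of `x₁`
  have hwindow : X * i b ≤ b - x₁ := by
    have := (abs_le.1 (hlip x₁ le_rfl b hbx₁)).2
    rw [abs_of_nonneg (sub_nonneg.2 hbx₁)] at this
    nlinarith [min_le_left (1 / 2 : ℝ) δ]
  have hshift : |i b * s| ≤ X * i b := by
    rw [abs_mul, abs_of_pos hib, mul_comm]
    gcongr
  have ht : x₁ ≤ b + i b * s := by linarith [neg_abs_le (i b * s)]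
  refine ⟨(hx₁ _ ht).1, ?_⟩
  calc |i (b + i b * s) - i b| ≤ η * |b + i b * s - b| := hlip b hbx₁ _ ht
    _ = η * X * i b - η * (X * i b - |i b * s|) := by rw [add_sub_cancel_left]; ring
    _ ≤ δ * i b := by
      nlinarith [min_le_right (1 / 2 : ℝ) δ, mul_nonneg hη.le (sub_nonneg.2 hshift)]

lemma tendsto_sub_of_hasDerivAt_inv {h : ℝ → ℝ} (hpos : ∀ x ≥ x₀, 0 < i x)
    (hderiv : ∀ x ≥ x₀, HasDerivAt i (i' x) x) (hlim : Tendsto i' atTop (𝓝 0))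
    (hh : ∀ x ≥ x₀, HasDerivAt h (i x)⁻¹ x) (x : ℝ) :
    Tendsto (fun b => h (b + i b * x) - h b) atTop (𝓝 x) := by
  rw [Metric.tendsto_nhds]
  intro ε hε
  set δ := min (1 / 2) (ε / (4 * (|x| + 1)))
  have hδ : 0 < δ := by positivity
  filter_upwards [eventually_abs_sub_le_of_tendsto_deriv hpos hderiv hlim (abs_nonneg x) hδ]
    with b hb
  have hib : 0 < i b := hpos b (by simpa using (hb 0 (by simp)).1)
  set g : ℝ → ℝ := fun s => h (b + i b * s) - s
  have hg : ∀ s ∈ Icc (-|x|) |x|,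
      HasDerivWithinAt g (i b * (i (b + i b * s))⁻¹ - 1) (Icc (-|x|) |x|) s := by
    intro s hs
    have := (hh _ (hb s (abs_le.2 hs)).1).comp s (((hasDerivAt_id s).const_mul (i b)).const_add b)
    exact (this.sub (hasDerivAt_id s)).hasDerivWithinAt.congr_deriv (by ring)
  have hg' : ∀ s ∈ Icc (-|x|) |x|, ‖i b * (i (b + i b * s))⁻¹ - 1‖ ≤ 2 * δ := by
    intro s hs
    obtain ⟨-, hclose⟩ := hb s (abs_le.2 hs)
    set t := b + i b * s
    have hhalf : i b / 2 ≤ i t := by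
      nlinarith [(abs_le.1 hclose).1, min_le_left (1 / 2 : ℝ) (ε / (4 * (|x| + 1)))]
    have ht : 0 < i t := by linarith
    rw [Real.norm_eq_abs, show i b * (i t)⁻¹ - 1 = (i b - i t) / i t by field_simp,
      abs_div, abs_of_pos ht, div_le_iff₀ ht, abs_sub_comm]
    nlinarith
  have hx : x ∈ Icc (-|x|) |x| := abs_le.1 le_rfl
  have hmvt := (convex_Icc _ _).norm_image_sub_le_of_norm_hasDerivWithin_le hg hg'
    ⟨neg_nonpos.2 (abs_nonneg x), abs_nonneg x⟩ hx
  simp only [g, mul_zero, add_zero, sub_zero, Real.norm_eq_abs] at hmvt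
  rw [Real.dist_eq, show h (b + i b * x) - h b - x = h (b + i b * x) - x - h b by ring]
  calc _ ≤ 2 * δ * |x| := hmvt
    _ ≤ 2 * (ε / (4 * (|x| + 1))) * (|x| + 1) := by gcongr; exacts [min_le_right _ _, by linarith]
    _ < ε := by field_simp; linarith

end SelfNeglecting

lemma tendsto_tail_div_exp_neg {T f i' : ℝ → ℝ} {x₀ : ℝ} (hT : ∀ x, 0 < T x)
    (hderiv : ∀ x ≥ x₀, HasDerivAt T (-f x) x) (hf : ∀ x ≥ x₀, 0 < f x)
    (hideriv : ∀ x ≥ x₀, HasDerivAt (fun y => T y / f y) (i' x) x)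
    (hlim : Tendsto i' atTop (𝓝 0)) (x : ℝ) :
    Tendsto (fun b => T (b + T b / f b * x) / T b) atTop (𝓝 (exp (-x))) := by
  have hlog : ∀ y ≥ x₀, HasDerivAt (fun y => -log (T y)) (T y / f y)⁻¹ y := fun y hy =>
    ((hderiv y hy).log (hT y).ne').neg.congr_deriv (by rw [neg_div, neg_neg, inv_div])
  have hexp := (continuous_exp.tendsto _).comp (tendsto_sub_of_hasDerivAt_inv
    (fun y hy => div_pos (hT y) (hf y hy)) hideriv hlim hlog x).neg
  refine hexp.congr fun b => ?_
  simp only [Function.comp_apply, neg_sub, sub_neg_eq_add, neg_add_eq_sub, exp_sub,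
    exp_log (hT _)]

lemma exists_seq_tendsto_atTop_mul_tail {T : ℝ → ℝ} {x₀ : ℝ} (hanti : Antitone T)
    (hpos : ∀ x, 0 < T x) (hcont : ContinuousOn T (Ici x₀)) (hlim : Tendsto T atTop (𝓝 0)) :
    ∃ b : ℕ → ℝ, (∀ n, x₀ ≤ b n) ∧ Tendsto b atTop atTop ∧
      Tendsto (fun n => n * T (b n)) atTop (𝓝 1) := by
  have hsurj : ∀ n : ℕ, ∃ y ≥ x₀, T y = min (1 / ((n : ℝ) + 1)) (T x₀) := fun n =>
    isPreconnected_Ici.intermediate_value_Ioc self_mem_Ici (le_principal_iff.2 (Ici_mem_atTop x₀))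
      hcont hlim ⟨lt_min (by positivity) (hpos x₀), min_le_right _ _⟩
  choose b hbx₀ hb using hsurj
  have hone_div : Tendsto (fun n : ℕ => 1 / ((n : ℝ) + 1)) atTop (𝓝 0) :=
    tendsto_one_div_add_atTop_nhds_zero_nat
  have hTb : ∀ᶠ n in atTop, T (b n) = 1 / (n + 1) := by
    filter_upwards [hone_div.eventually_le_const (hpos x₀)] with n hn
    rw [hb, min_eq_left hn]
  have hTb_lim : Tendsto (fun n => T (b n)) atTop (𝓝 0) :=
    hone_div.congr' (hTb.mono fun _ => Eq.symm)
  refine ⟨b, hbx₀, tendsto_atTop.2 fun M => ?_, ?_⟩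
  · filter_upwards [hTb_lim.eventually_lt_const (hpos M)] with n hn
    by_contra! hlt
    exact (hanti hlt.le).not_gt hn
  · refine (tendsto_natCast_div_add_atTop (1 : ℝ)).congr' ?_
    filter_upwards [hTb] with n hn
    rw [hn, mul_one_div]

/-- **Von Mises condition for the Gumbel domain.**  Let `F` be a distribution
function with upper end-point `x₊ = ∞` (so the tail `F̄ = 1 - F` is positive
everywhere), differentiable with density `f`, with `f > 0` on a neighbourhood
`[x₀, ∞)` of `∞`.  If the inverse hazard function `i(x) = F̄(x)/f(x)` is
differentiable there with derivative `i'` and `i'(x) → 0` as `x → ∞`, then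
`F ∈ D(Λ)`. -/
theorem vonMises_gumbel (F f i' : ℝ → ℝ) (hF : IsDistFun F)
    (hxp : ∀ x, F x < 1)
    (x₀ : ℝ)
    (hderiv : ∀ x ≥ x₀, HasDerivAt F (f x) x)
    (hfpos : ∀ x ≥ x₀, 0 < f x)
    (hideriv : ∀ x ≥ x₀, HasDerivAt (fun y => (1 - F y) / f y) (i' x) x)
    (hlim : Tendsto i' atTop (𝓝 0)) :
    MemDomAttr F gumbel := by
  obtain ⟨hmono, -, -, htop⟩ := hF
  have htail : ∀ x, 0 < 1 - F x := fun x => sub_pos.2 (hxp x)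
  have htail_deriv : ∀ x ≥ x₀, HasDerivAt (fun y => 1 - F y) (-f x) x := fun x hx =>
    (hderiv x hx).const_sub 1
  obtain ⟨b, hbx₀, hbtop, hnb⟩ := exists_seq_tendsto_atTop_mul_tail
    (fun x y hxy => sub_le_sub_left (hmono hxy) 1) htail
    (fun x hx => (htail_deriv x hx).continuousAt.continuousWithinAt)
    (by simpa using (tendsto_const_nhds (x := (1 : ℝ))).sub htop)
  refine ⟨fun n => (1 - F (b n)) / f (b n), b, fun n => div_pos (htail _) (hfpos _ (hbx₀ n)),
    fun x _ => ?_⟩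
  have hratio :=
    (tendsto_tail_div_exp_neg htail htail_deriv hfpos hideriv hlim x).comp hbtop
  have hmul : Tendsto (fun n : ℕ => n * (F ((1 - F (b n)) / f (b n) * x + b n) - 1)) atTop
      (𝓝 (-exp (-x))) := by
    have hprod := (hnb.mul hratio).neg
    rw [one_mul] at hprod
    refine hprod.congr fun n => ?_
    simp only [Function.comp_apply, add_comm (b n)]
    field_simp [(htail (b n)).ne']
    ring
  simpa [gumbel] using Real.tendsto_one_add_pow_exp_of_tendsto hmul
end

section
/- If a : ℝ → (0,∞) is differentiable and a′(t) → 0 as t → ∞, then a is self-neglecting: a(t + x a(t))/a(t) → 1 as t → ∞ uniformly in x on compact subsets of ℝ. -/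
/-! A function with `a' → 0` is eventually `δ`-Lipschitz for every `δ > 0`. Hence `a(t) = o(t)`,
so `t + x a(t) → ∞` uniformly for `x` in a compact set, and then
`|a(t + x a(t)) - a(t)| ≤ δ |x| a(t)` for all large `t`. -/

open Filter Topology Asymptotics

section

variable {E : Type*} [NormedAddCommGroup E] [NormedSpace ℝ E] {f : ℝ → E}

theorem exists_norm_sub_le_of_tendsto_deriv_zero (hf : Differentiable ℝ f)
    (hderiv : Tendsto (deriv f) atTop (𝓝 0)) {δ : ℝ} (hδ : 0 < δ) :
    ∃ T, ∀ u ∈ Set.Ici T, ∀ v ∈ Set.Ici T, ‖f v - f u‖ ≤ δ * ‖v - u‖ := by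
  obtain ⟨T, hT⟩ := eventually_atTop.mp (hderiv.eventually (Metric.closedBall_mem_nhds 0 hδ))
  refine ⟨T, fun u hu v hv => ?_⟩
  refine (convex_Ici T).norm_image_sub_le_of_norm_deriv_le (fun x _ => hf x) (fun x hx => ?_) hu hv
  simpa using hT x hx

theorem isLittleO_id_of_tendsto_deriv_zero (hf : Differentiable ℝ f)
    (hderiv : Tendsto (deriv f) atTop (𝓝 0)) : f =o[atTop] id := by
  refine IsLittleO.of_bound fun c hc => ?_
  obtain ⟨T, hT⟩ := exists_norm_sub_le_of_tendsto_deriv_zero hf hderiv (half_pos hc)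
  filter_upwards [eventually_ge_atTop T, eventually_ge_atTop 0,
    eventually_ge_atTop ((‖f T‖ + c / 2 * |T|) / (c / 2))] with t htT ht0 htbig
  have hLip := hT T Set.self_mem_Ici t htT
  rw [div_le_iff₀ (half_pos hc)] at htbig
  calc ‖f t‖ ≤ ‖f T‖ + ‖f t - f T‖ := norm_le_norm_add_norm_sub' (f t) (f T)
    _ ≤ ‖f T‖ + c / 2 * (|t| + |T|) := by
        gcongr
        exact hLip.trans (by gcongr; exact norm_sub_le t T)
    _ ≤ c * ‖id t‖ := by
        rw [id, Real.norm_eq_abs, abs_of_nonneg ht0]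
        linarith

end

theorem eventually_le_add_mul_of_isLittleO_id {a : ℝ → ℝ} (ha : a =o[atTop] id) {M : ℝ}
    (hM : 0 ≤ M) (T : ℝ) : ∀ᶠ t in atTop, ∀ x, |x| ≤ M → T ≤ t + x * a t := by
  filter_upwards [ha.bound (c := 1 / (2 * (M + 1))) (by positivity), eventually_ge_atTop 0,
    eventually_ge_atTop (2 * T)] with t hat ht0 htT x hx
  rw [Real.norm_eq_abs, id, Real.norm_eq_abs, abs_of_nonneg ht0] at hat
  have hxa : |x * a t| ≤ t / 2 :=
    calc |x * a t| = |x| * |a t| := abs_mul x (a t)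
      _ ≤ M * (1 / (2 * (M + 1)) * t) := by gcongr
      _ ≤ t / 2 := by
          field_simp
          nlinarith
  linarith [neg_abs_le (x * a t)]

theorem abs_div_sub_one_le_of_abs_sub_le {a : ℝ → ℝ} {t x δ : ℝ} (hat : 0 < a t)
    (h : |a (t + x * a t) - a t| ≤ δ * |t + x * a t - t|) :
    |a (t + x * a t) / a t - 1| ≤ δ * |x| := by
  rw [div_sub_one hat.ne', abs_div, abs_of_pos hat, div_le_iff₀ hat]
  rwa [add_sub_cancel_left, abs_mul, abs_of_pos hat, ← mul_assoc] at h

/-- If `a : ℝ → (0,∞)` is differentiable with `a'(t) → 0` as `t → ∞`, then `a`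
is self-neglecting. -/
theorem selfNeglecting_of_deriv_tendsto_zero (a : ℝ → ℝ)
    (hpos : ∀ t, 0 < a t) (hdiff : Differentiable ℝ a)
    (hderiv : Tendsto (deriv a) atTop (𝓝 0)) :
    SelfNeglecting a := by
  refine ⟨hpos, fun K hK => Metric.tendstoUniformlyOn_iff.mpr fun ε hε => ?_⟩
  obtain ⟨M, hM0, hMK⟩ := hK.isBounded.exists_pos_norm_le
  obtain ⟨T, hT⟩ := exists_norm_sub_le_of_tendsto_deriv_zero hdiff hderiv
    (div_pos hε (by linarith : 0 < M + 1))
  filter_upwards [eventually_ge_atTop T, eventually_le_add_mul_of_isLittleO_id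
    (isLittleO_id_of_tendsto_deriv_zero hdiff hderiv) hM0.le T] with t htT hshift x hx
  have hxM : |x| ≤ M := hMK x hx
  have hbound := abs_div_sub_one_le_of_abs_sub_le (hpos t) (hT t htT _ (hshift x hxM))
  rw [dist_comm, Real.dist_eq]
  calc |a (t + x * a t) / a t - 1| ≤ ε / (M + 1) * |x| := hbound
    _ ≤ ε / (M + 1) * M := by gcongr
    _ < ε / (M + 1) * (M + 1) := by gcongr; linarith
    _ = ε := div_mul_cancel₀ ε (by positivity)
end

section
/- Representation theorem for self-neglecting functions: A continuous function a : ℝ → (0,∞) is self-neglecting if and only if there exist a constant c > 0, a continuously differentiable function e : ℝ → ℝ with e(u) → 0 as u → ∞, and a function h : ℝ → ℝ with h(x) → 1 as x → ∞, such that a(x) = c · h(x) · ∫_0^x e(u) du for all sufficiently large x. -/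
/-!
If `a = k · F` near `∞` with `k → 1` and `F' → 0`, then `a` is self-neglecting: `F` changes by
`o(a t)` across the window `[t, t + x a t]`, and `a t = o(t)` keeps that window near `∞`.

Conversely, let `p` be self-neglecting. The time change `τ(x) = ∫₀ˣ 1/p` turns `log p` into
`g = log p ∘ τ⁻¹`, which varies by `o(1)` on unit intervals near `∞`. Iterated unit moving
averages smooth `g` into `G` with `G - g → 0` and `G' → 0`, so `q = exp (G ∘ τ)` satisfies
`q / p → 1` and `q' = (q / p) · G'(τ) → 0`, and `q` is one degree smoother than `p`. Since `q` is
self-neglecting by the first part, a second round yields a `C²` function `φ` with `a / φ → 1` and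
`φ' → 0`; then `e = (χ φ)'` for a smooth cutoff `χ` vanishing on `(-∞, 0]` has
`∫₀ˣ e = φ x` for `x ≥ 1`.
-/

open Filter Topology

open Set

theorem selfNeglecting_iff_tendsto {a : ℝ → ℝ} :
    SelfNeglecting a ↔ (∀ t, 0 < a t) ∧ ∀ K : Set ℝ, IsCompact K →
      Tendsto (fun q : ℝ × ℝ => a (q.1 + q.2 * a q.1) / a q.1) (atTop ×ˢ 𝓟 K) (𝓝 1) := by
  simp only [SelfNeglecting, ← tendsto_prod_principal_iff]
  rfl

section DerivTendstoZero

variable {F f : ℝ → ℝ}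

theorem eventually_abs_sub_le_of_tendsto_deriv_s11 (hF : ∀ x, HasDerivAt F (f x) x)
    (hf : Tendsto f atTop (𝓝 0)) {ε : ℝ} (hε : 0 < ε) :
    ∀ᶠ X in atTop, ∀ x ≥ X, ∀ y ≥ X, |F x - F y| ≤ ε * |x - y| := by
  have hbound : ∀ᶠ z in atTop, ‖f z‖ ≤ ε := by
    simpa using hf.eventually (Metric.closedBall_mem_nhds 0 hε)
  obtain ⟨X, hX⟩ := eventually_atTop.1 hbound
  filter_upwards [eventually_ge_atTop X] with Y hY x hx y hy
  exact (convex_Ici Y).norm_image_sub_le_of_norm_hasDerivWithin_le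
    (fun z _ => (hF z).hasDerivWithinAt) (fun z hz => hX z (hY.trans hz)) hy hx

theorem tendsto_div_self_of_tendsto_deriv (hF : ∀ x, HasDerivAt F (f x) x)
    (hf : Tendsto f atTop (𝓝 0)) : Tendsto (fun x => F x / x) atTop (𝓝 0) := by
  refine Metric.tendsto_nhds.2 fun ε hε => ?_
  obtain ⟨X, hLip, hX⟩ :=
    ((eventually_abs_sub_le_of_tendsto_deriv_s11 hF hf (half_pos hε)).and
      (eventually_ge_atTop 0)).exists
  have hconst : Tendsto (fun x => F X / x) atTop (𝓝 0) :=
    tendsto_const_nhds.div_atTop tendsto_id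
  filter_upwards [Metric.tendsto_nhds.1 hconst _ (half_pos hε), eventually_gt_atTop X]
    with x hFX hx
  have hx0 : 0 < x := hX.trans_lt hx
  have hdiff : |(F x - F X) / x| ≤ ε / 2 := by
    rw [abs_div, abs_of_pos hx0, div_le_iff₀ hx0]
    calc |F x - F X| ≤ ε / 2 * |x - X| := hLip x hx.le X le_rfl
      _ ≤ ε / 2 * x := by
        gcongr
        rw [abs_of_pos (sub_pos.2 hx)]
        linarith
  rw [Real.dist_eq, sub_zero] at hFX ⊢
  calc |F x / x| = |(F x - F X) / x + F X / x| := by ring_nf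
    _ ≤ |(F x - F X) / x| + |F X / x| := abs_add_le _ _
    _ < ε := by linarith

end DerivTendstoZero

theorem tendsto_add_mul_atTop_of_div {a : ℝ → ℝ} {K : Set ℝ} (hK : Bornology.IsBounded K)
    (ha : Tendsto (fun t => a t / t) atTop (𝓝 0)) :
    Tendsto (fun q : ℝ × ℝ => q.1 + q.2 * a q.1) (atTop ×ˢ 𝓟 K) atTop := by
  obtain ⟨M, hM⟩ := hK.exists_norm_le
  have hfst : Tendsto Prod.fst (atTop ×ˢ 𝓟 K : Filter (ℝ × ℝ)) atTop := tendsto_fst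
  have hsmall : Tendsto (fun q : ℝ × ℝ => q.2 * (a q.1 / q.1)) (atTop ×ˢ 𝓟 K) (𝓝 0) := by
    refine squeeze_zero_norm' ?_ (by simpa using ((ha.comp hfst).abs).const_mul M)
    refine eventually_prod_principal_iff.2 (Eventually.of_forall fun t x hx => ?_)
    rw [Real.norm_eq_abs, abs_mul]
    exact mul_le_mul_of_nonneg_right (hM x hx) (abs_nonneg _)
  refine (hfst.atTop_mul_pos one_pos
    (by simpa using (tendsto_const_nhds (x := (1:ℝ))).add hsmall)).congr' ?_
  filter_upwards [hfst.eventually (eventually_gt_atTop 0)] with q hq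
  field_simp

theorem tendsto_sub_div_of_tendsto_deriv {a F f : ℝ → ℝ} {K : Set ℝ} (ha : ∀ t, 0 < a t)
    (hF : ∀ x, HasDerivAt F (f x) x) (hf : Tendsto f atTop (𝓝 0)) (hK : Bornology.IsBounded K)
    (hs : Tendsto (fun q : ℝ × ℝ => q.1 + q.2 * a q.1) (atTop ×ˢ 𝓟 K) atTop) :
    Tendsto (fun q : ℝ × ℝ => (F (q.1 + q.2 * a q.1) - F q.1) / a q.1) (atTop ×ˢ 𝓟 K)
      (𝓝 0) := by
  obtain ⟨M, hM⟩ := hK.exists_norm_le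
  refine Metric.tendsto_nhds.2 fun ε hε => ?_
  have hε' : 0 < ε / (|M| + 1) := by positivity
  obtain ⟨X, hX⟩ := (eventually_abs_sub_le_of_tendsto_deriv_s11 hF hf hε').exists
  have hsnd : ∀ᶠ q : ℝ × ℝ in atTop ×ˢ 𝓟 K, ‖q.2‖ ≤ M :=
    eventually_prod_principal_iff.2 (Eventually.of_forall fun _ x hx => hM x hx)
  filter_upwards [hsnd, tendsto_fst.eventually (eventually_ge_atTop X),
    hs.eventually (eventually_ge_atTop X)] with q hq ht hst
  have hat := ha q.1
  rw [Real.dist_eq, sub_zero, abs_div, abs_of_pos hat, div_lt_iff₀ hat]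
  calc |F (q.1 + q.2 * a q.1) - F q.1| ≤ ε / (|M| + 1) * |q.1 + q.2 * a q.1 - q.1| :=
        hX _ hst _ ht
    _ = ε / (|M| + 1) * ‖q.2‖ * a q.1 := by
      rw [add_sub_cancel_left, abs_mul, abs_of_pos hat, Real.norm_eq_abs]; ring
    _ < ε * a q.1 := by
      gcongr
      rw [div_mul_eq_mul_div, div_lt_iff₀ (by positivity)]
      nlinarith [le_abs_self M]

theorem selfNeglecting_of_eventuallyEq_mul {a k F f : ℝ → ℝ} (ha : ∀ t, 0 < a t)
    (hF : ∀ x, HasDerivAt F (f x) x) (hf : Tendsto f atTop (𝓝 0))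
    (hk : Tendsto k atTop (𝓝 1)) (haF : ∀ᶠ x in atTop, a x = k x * F x) :
    SelfNeglecting a := by
  refine selfNeglecting_iff_tendsto.2 ⟨ha, fun K hK => ?_⟩
  have hfst : Tendsto Prod.fst (atTop ×ˢ 𝓟 K : Filter (ℝ × ℝ)) atTop := tendsto_fst
  set s : ℝ × ℝ → ℝ := fun q => q.1 + q.2 * a q.1
  have ha_div : Tendsto (fun t => a t / t) atTop (𝓝 0) := by
    have := hk.mul (tendsto_div_self_of_tendsto_deriv hF hf)
    rw [one_mul] at this
    refine this.congr' ?_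
    filter_upwards [haF] with t ht
    rw [ht, mul_div_assoc]
  have hs : Tendsto s (atTop ×ˢ 𝓟 K) atTop := tendsto_add_mul_atTop_of_div hK.isBounded ha_div
  have hdiff := tendsto_sub_div_of_tendsto_deriv ha hF hf hK.isBounded hs
  -- `a s / a t = (k s / k t) · (F s / F t)`, and `F s / F t - 1 = k t · (F s - F t) / a t`
  have hkey : ∀ᶠ q in atTop ×ˢ 𝓟 K,
      k (s q) / k q.1 * (1 + k q.1 * ((F (s q) - F q.1) / a q.1)) = a (s q) / a q.1 := by
    filter_upwards [hfst.eventually haF, hs.eventually haF] with q ht hs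
    have hkt : k q.1 ≠ 0 := left_ne_zero_of_mul (ht ▸ (ha q.1).ne')
    have hat := (ha q.1).ne'
    rw [hs]
    field_simp
    rw [ht]
    ring
  have hlim := ((hk.comp hs).div (hk.comp hfst) one_ne_zero).mul
    ((tendsto_const_nhds (x := (1:ℝ))).add ((hk.comp hfst).mul hdiff))
  simp only [div_one, mul_zero, add_zero, mul_one] at hlim
  exact hlim.congr' hkey

open intervalIntegral

noncomputable def movingAverage (g : ℝ → ℝ) (s : ℝ) : ℝ := ∫ r in s..s + 1, g r

section MovingAverage

variable {g : ℝ → ℝ}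

theorem hasDerivAt_movingAverage (hg : Continuous g) (s : ℝ) :
    HasDerivAt (movingAverage g) (g (s + 1) - g s) s := by
  have hprim := fun x => (hg.integral_hasStrictDerivAt 0 x).hasDerivAt
  have := ((hprim (s + 1)).comp_add_const s 1).sub (hprim s)
  refine this.congr_of_eventuallyEq (Eventually.of_forall fun r => ?_)
  exact (integral_interval_sub_left (hg.intervalIntegrable _ _) (hg.intervalIntegrable _ _)).symm

theorem deriv_movingAverage (hg : Continuous g) :
    deriv (movingAverage g) = fun s => g (s + 1) - g s :=
  funext fun s => (hasDerivAt_movingAverage hg s).deriv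

theorem ContDiff.movingAverage {n : ℕ} (hg : ContDiff ℝ n g) :
    ContDiff ℝ (n + 1) (movingAverage g) := by
  refine contDiff_succ_iff_deriv.2
    ⟨fun s => (hasDerivAt_movingAverage hg.continuous s).differentiableAt, by simp, ?_⟩
  rw [deriv_movingAverage hg.continuous]
  exact (hg.comp (contDiff_id.add contDiff_const)).sub hg

theorem abs_movingAverage_sub_le (hg : Continuous g) {s c ε : ℝ}
    (h : ∀ r ∈ Icc s (s + 1), |g r - c| ≤ ε) : |movingAverage g s - c| ≤ ε := by
  have hsub : movingAverage g s - c = ∫ r in s..s + 1, (g r - c) := by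
    simp [movingAverage, integral_sub (hg.intervalIntegrable _ _) intervalIntegrable_const]
  rw [hsub]
  simpa using norm_integral_le_of_norm_le_const (a := s) (b := s + 1)
    (f := fun r => g r - c) fun r hr => h r (Ioc_subset_Icc_self (by simpa using hr))

theorem movingAverage_eventually_eq_const {c : ℝ} (h : ∀ᶠ s in atBot, g s = c) :
    ∀ᶠ s in atBot, movingAverage g s = c := by
  obtain ⟨S, hS⟩ := eventually_atBot.1 h
  filter_upwards [eventually_le_atBot (S - 1)] with s hs
  rw [movingAverage, integral_congr (g := fun _ => c), integral_const, smul_eq_mul]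
  · ring
  · intro r hr
    rw [uIcc_of_le (by linarith)] at hr
    exact hS r (by linarith [hr.2])

end MovingAverage

def FlatAtTop (g : ℝ → ℝ) : Prop :=
  ∀ ε > 0, ∀ᶠ s in atTop, ∀ u ∈ Icc (0:ℝ) 1, |g (s + u) - g s| ≤ ε

namespace FlatAtTop

variable {g : ℝ → ℝ}

theorem tendsto_add_one_sub (h : FlatAtTop g) :
    Tendsto (fun s => g (s + 1) - g s) atTop (𝓝 0) := by
  refine Metric.tendsto_nhds.2 fun ε hε => ?_
  filter_upwards [h (ε / 2) (half_pos hε)] with s hs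
  rw [Real.dist_eq, sub_zero]
  linarith [hs 1 (by simp)]

theorem tendsto_movingAverage_sub (hg : Continuous g) (h : FlatAtTop g) :
    Tendsto (fun s => movingAverage g s - g s) atTop (𝓝 0) := by
  refine Metric.tendsto_nhds.2 fun ε hε => ?_
  filter_upwards [h (ε / 2) (half_pos hε)] with s hs
  rw [Real.dist_eq, sub_zero]
  refine (abs_movingAverage_sub_le hg fun r hr => ?_).trans_lt (half_lt_self hε)
  simpa using hs (r - s) ⟨by linarith [hr.1], by linarith [hr.2]⟩

theorem movingAverage (hg : Continuous g) (h : FlatAtTop g) : FlatAtTop (movingAverage g) := by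
  intro ε hε
  filter_upwards [eventually_forall_ge_atTop.2 (h ε hε)] with s hs u hu
  have hshift : _root_.movingAverage g (s + u) - _root_.movingAverage g s =
      _root_.movingAverage (fun r => g (r + u) - g r) s := by
    have hshift_int : IntervalIntegrable (fun r => g (r + u)) MeasureTheory.volume s (s + 1) :=
      (hg.comp (continuous_add_const u)).intervalIntegrable _ _
    simp only [_root_.movingAverage]
    rw [integral_sub hshift_int (hg.intervalIntegrable _ _), integral_comp_add_right,
      add_right_comm]
  rw [hshift, ← sub_zero (_root_.movingAverage _ s)]
  exact abs_movingAverage_sub_le ((hg.comp (continuous_add_const u)).sub hg)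
    fun r hr => by simpa using hs r hr.1 u hu

end FlatAtTop

theorem exists_contDiff_flatAtTop_approx {g : ℝ → ℝ} {c : ℝ} (hg : Continuous g)
    (hflat : FlatAtTop g) (hbot : ∀ᶠ s in atBot, g s = c) (n : ℕ) :
    ∃ G : ℝ → ℝ, ContDiff ℝ n G ∧ FlatAtTop G ∧ Tendsto (fun s => G s - g s) atTop (𝓝 0) ∧
      ∀ᶠ s in atBot, G s = c := by
  induction n with
  | zero => exact ⟨g, contDiff_zero.2 hg, hflat, by simp, hbot⟩
  | succ n ih =>
    obtain ⟨G, hG, hGflat, hGg, hGbot⟩ := ih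
    refine ⟨movingAverage G, mod_cast hG.movingAverage, hGflat.movingAverage hG.continuous,
      ?_, movingAverage_eventually_eq_const hGbot⟩
    simpa using (hGflat.tendsto_movingAverage_sub hG.continuous).add hGg

noncomputable def timeChange (p : ℝ → ℝ) (x : ℝ) : ℝ := ∫ t in (0:ℝ)..x, (p t)⁻¹

section TimeChange

variable {p : ℝ → ℝ}

theorem hasDerivAt_timeChange (hp : Continuous p) (hp_pos : ∀ x, 0 < p x) (x : ℝ) :
    HasDerivAt (timeChange p) (p x)⁻¹ x :=
  ((hp.inv₀ fun t => (hp_pos t).ne').integral_hasStrictDerivAt 0 x).hasDerivAt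

theorem strictMono_timeChange (hp : Continuous p) (hp_pos : ∀ x, 0 < p x) :
    StrictMono (timeChange p) :=
  strictMono_of_hasDerivAt_pos (hasDerivAt_timeChange hp hp_pos) fun x => inv_pos.2 (hp_pos x)

theorem continuous_timeChange (hp : Continuous p) (hp_pos : ∀ x, 0 < p x) :
    Continuous (timeChange p) :=
  continuous_iff_continuousAt.2 fun x => (hasDerivAt_timeChange hp hp_pos x).continuousAt

theorem timeChange_sub (hp : Continuous p) (hp_pos : ∀ x, 0 < p x) (x y : ℝ) :
    timeChange p y - timeChange p x = ∫ t in x..y, (p t)⁻¹ :=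
  integral_interval_sub_left ((hp.inv₀ fun t => (hp_pos t).ne').intervalIntegrable _ _)
    ((hp.inv₀ fun t => (hp_pos t).ne').intervalIntegrable _ _)

theorem ContDiff.timeChange {n : ℕ} (hp : ContDiff ℝ n p) (hp_pos : ∀ x, 0 < p x) :
    ContDiff ℝ (n + 1) (timeChange p) := by
  have hderiv := hasDerivAt_timeChange hp.continuous hp_pos
  refine contDiff_succ_iff_deriv.2 ⟨fun x => (hderiv x).differentiableAt, by simp, ?_⟩
  rw [funext fun x => (hderiv x).deriv]
  exact hp.inv fun x => (hp_pos x).ne'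

theorem tendsto_timeChange_atBot (hp : Continuous p) (hp_pos : ∀ x, 0 < p x) {c : ℝ}
    (hbot : ∀ᶠ x in atBot, p x = c) : Tendsto (timeChange p) atBot atBot := by
  obtain ⟨X, hX⟩ := eventually_atBot.1 hbot
  have hlin : Tendsto (fun x => timeChange p X + (x - X) * c⁻¹) atBot atBot :=
    tendsto_atBot_add_const_left _ _ <|
      (tendsto_atBot_add_const_right _ _ tendsto_id).atBot_mul_const
        (inv_pos.2 (hX X le_rfl ▸ hp_pos X))
  refine hlin.congr' ?_
  filter_upwards [eventually_le_atBot X] with x hx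
  have hsub := timeChange_sub hp hp_pos X x
  rw [integral_congr (g := fun _ => c⁻¹), integral_const, smul_eq_mul] at hsub
  · linarith
  · intro t ht
    rw [uIcc_of_ge hx] at ht
    simp [hX t ht.2]

theorem eventually_forall_window (hp_pos : ∀ x, 0 < p x)
    (hSN : TendstoUniformlyOn (fun t x => p (t + x * p t) / p t) (fun _ => 1) atTop (Icc 0 2))
    {P : ℝ → Prop} (hP : ∀ᶠ r in 𝓝 1, P r) :
    ∀ᶠ t in atTop, ∀ y ∈ Icc t (t + 2 * p t), P (p y / p t) := by
  filter_upwards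
    [eventually_prod_principal_iff.1 ((tendsto_prod_principal_iff.2 hSN).eventually hP)]
    with t ht y hy
  have hpt := hp_pos t
  have hx : (y - t) / p t ∈ Icc (0:ℝ) 2 :=
    ⟨div_nonneg (by linarith [hy.1]) hpt.le, by rw [div_le_iff₀ hpt]; linarith [hy.2]⟩
  have : P (p (t + (y - t) / p t * p t) / p t) := ht _ hx
  rwa [div_mul_cancel₀ _ hpt.ne', add_sub_cancel] at this

theorem eventually_timeChange_add_one_le (hp : Continuous p) (hp_pos : ∀ x, 0 < p x)
    (hSN : TendstoUniformlyOn (fun t x => p (t + x * p t) / p t) (fun _ => 1) atTop (Icc 0 2)) :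
    ∀ᶠ t in atTop, timeChange p t + 1 ≤ timeChange p (t + 2 * p t) := by
  filter_upwards [eventually_forall_window hp_pos hSN (eventually_le_nhds one_lt_two)] with t ht
  have hpt := hp_pos t
  have hmono : ∫ _ in t..t + 2 * p t, (2 * p t)⁻¹ ≤ ∫ y in t..t + 2 * p t, (p y)⁻¹ :=
    integral_mono_on (by linarith) intervalIntegrable_const
      ((hp.inv₀ fun y => (hp_pos y).ne').intervalIntegrable _ _)
      fun y hy => inv_anti₀ (hp_pos y) ((div_le_iff₀ hpt).1 (ht y hy))
  rw [integral_const, smul_eq_mul, add_sub_cancel_left, mul_inv_cancel₀ (by positivity),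
    ← timeChange_sub hp hp_pos] at hmono
  linarith

theorem tendsto_timeChange_atTop (hp : Continuous p) (hp_pos : ∀ x, 0 < p x)
    (hSN : TendstoUniformlyOn (fun t x => p (t + x * p t) / p t) (fun _ => 1) atTop (Icc 0 2)) :
    Tendsto (timeChange p) atTop atTop := by
  have hmono := (strictMono_timeChange hp hp_pos).monotone
  refine tendsto_atTop_atTop_of_monotone hmono fun b => ?_
  by_contra! hbdd
  have hbdd' : BddAbove (range (timeChange p)) := ⟨b, by rintro _ ⟨x, rfl⟩; exact (hbdd x).le⟩
  obtain ⟨T, hT⟩ := eventually_atTop.1 (eventually_timeChange_add_one_le hp hp_pos hSN)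
  obtain ⟨t₀, ht₀⟩ := exists_lt_of_lt_ciSup (sub_lt_self (⨆ x, timeChange p x) one_pos)
  have hstep := hT (max T t₀) (le_max_left _ _)
  have hsup := le_ciSup hbdd' (max T t₀ + 2 * p (max T t₀))
  linarith [hmono (le_max_right T t₀)]

theorem exists_orderIso_timeChange (hp : Continuous p) (hp_pos : ∀ x, 0 < p x)
    (hSN : TendstoUniformlyOn (fun t x => p (t + x * p t) / p t) (fun _ => 1) atTop (Icc 0 2))
    {c : ℝ} (hbot : ∀ᶠ x in atBot, p x = c) : ∃ e : ℝ ≃o ℝ, ∀ x, e x = timeChange p x :=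
  ⟨(strictMono_timeChange hp hp_pos).orderIsoOfSurjective _
    ((continuous_timeChange hp hp_pos).surjective (tendsto_timeChange_atTop hp hp_pos hSN)
      (tendsto_timeChange_atBot hp hp_pos hbot)), fun _ => rfl⟩

theorem flatAtTop_log_comp_symm (hp : Continuous p) (hp_pos : ∀ x, 0 < p x)
    (hSN : TendstoUniformlyOn (fun t x => p (t + x * p t) / p t) (fun _ => 1) atTop (Icc 0 2))
    (e : ℝ ≃o ℝ) (he : ∀ x, e x = timeChange p x) :
    FlatAtTop fun s => Real.log (p (e.symm s)) := by
  intro ε hε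
  have hlog : ∀ᶠ r in 𝓝 (1:ℝ), |Real.log r| ≤ ε := by
    have : Tendsto Real.log (𝓝 1) (𝓝 0) := by
      simpa using (Real.continuousAt_log one_ne_zero).tendsto
    simpa [Real.dist_eq] using this.eventually (Metric.closedBall_mem_nhds 0 hε)
  filter_upwards [e.symm.tendsto_atTop.eventually ((eventually_forall_window hp_pos hSN hlog).and
    (eventually_timeChange_add_one_le hp hp_pos hSN))] with s ⟨hwin, hstep⟩ u hu
  have hts : timeChange p (e.symm s) = s := by rw [← he, e.apply_symm_apply]
  have hy : e.symm (s + u) ∈ Icc (e.symm s) (e.symm s + 2 * p (e.symm s)) :=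
    ⟨e.symm.monotone (by linarith [hu.1]), e.symm_apply_le.2 (by rw [he]; linarith [hu.2])⟩
  rw [← Real.log_div (hp_pos _).ne' (hp_pos _).ne']
  exact hwin _ hy

end TimeChange

theorem exists_contDiff_succ_div_tendsto_one {p : ℝ → ℝ} {c : ℝ} (n : ℕ) (hp : ContDiff ℝ n p)
    (hp_pos : ∀ x, 0 < p x)
    (hSN : TendstoUniformlyOn (fun t x => p (t + x * p t) / p t) (fun _ => 1) atTop (Icc 0 2))
    (hbot : ∀ᶠ x in atBot, p x = c) :
    ∃ q : ℝ → ℝ, (∀ x, 0 < q x) ∧ ContDiff ℝ (n + 1) q ∧ Tendsto (deriv q) atTop (𝓝 0) ∧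
      Tendsto (fun x => q x / p x) atTop (𝓝 1) ∧ ∀ᶠ x in atBot, q x = c := by
  have hpc := hp.continuous
  obtain ⟨e, he⟩ := exists_orderIso_timeChange hpc hp_pos hSN hbot
  have hτ : Tendsto (timeChange p) atTop atTop := tendsto_timeChange_atTop hpc hp_pos hSN
  set g : ℝ → ℝ := fun s => Real.log (p (e.symm s))
  have hg : Continuous g := (hpc.comp e.symm.continuous).log fun s => (hp_pos _).ne'
  have hgτ : ∀ x, g (timeChange p x) = Real.log (p x) := fun x => by simp [g, ← he]
  have hg_bot : ∀ᶠ s in atBot, g s = Real.log c :=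
    e.symm.tendsto_atBot.eventually (p := fun x => Real.log (p x) = Real.log c)
      (hbot.mono fun x hx => by rw [hx])
  obtain ⟨H, hH, hHflat, hHg, hHbot⟩ := exists_contDiff_flatAtTop_approx hg
    (flatAtTop_log_comp_symm hpc hp_pos hSN e he) hg_bot n
  have hGg : Tendsto (fun s => movingAverage H s - g s) atTop (𝓝 0) := by
    simpa using (hHflat.tendsto_movingAverage_sub hH.continuous).add hHg
  set q : ℝ → ℝ := fun x => Real.exp (movingAverage H (timeChange p x))
  have hq_div : ∀ x, q x / p x =
      Real.exp (movingAverage H (timeChange p x) - g (timeChange p x)) := by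
    intro x
    rw [Real.exp_sub, hgτ, Real.exp_log (hp_pos x)]
  have hq_p : Tendsto (fun x => q x / p x) atTop (𝓝 1) := by
    have := (Real.continuous_exp.tendsto 0).comp (hGg.comp hτ)
    rw [Real.exp_zero] at this
    exact this.congr fun x => (hq_div x).symm
  have hderiv : ∀ x, HasDerivAt q
      (q x * ((H (timeChange p x + 1) - H (timeChange p x)) * (p x)⁻¹)) x := fun x =>
    ((hasDerivAt_movingAverage hH.continuous _).comp x (hasDerivAt_timeChange hpc hp_pos x)).exp
  refine ⟨q, fun x => Real.exp_pos _, ?_, ?_, hq_p, ?_⟩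
  · exact Real.contDiff_exp.comp (hH.movingAverage.comp (hp.timeChange hp_pos))
  · have := hq_p.mul (hHflat.tendsto_add_one_sub.comp hτ)
    rw [mul_zero] at this
    refine this.congr fun x => ?_
    rw [(hderiv x).deriv, Function.comp_apply]
    ring
  · obtain ⟨x, hx⟩ := hbot.exists
    have hc : 0 < c := hx ▸ hp_pos x
    filter_upwards [(tendsto_timeChange_atBot hpc hp_pos hbot).eventually
      (movingAverage_eventually_eq_const hHbot)] with x hx
    simp [q, hx, Real.exp_log hc]

theorem SelfNeglecting.exists_contDiff_two_div_tendsto_one {a : ℝ → ℝ} (hSN : SelfNeglecting a)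
    (hcont : Continuous a) :
    ∃ φ : ℝ → ℝ, (∀ x, 0 < φ x) ∧ ContDiff ℝ 2 φ ∧ Tendsto (deriv φ) atTop (𝓝 0) ∧
      Tendsto (fun x => a x / φ x) atTop (𝓝 1) := by
  -- freezing `a` on `(-∞, 0]` makes the time change of `b` a bijection of `ℝ`
  set b : ℝ → ℝ := fun x => a (max x 0)
  have hb : ContDiff ℝ (0 : ℕ) b :=
    contDiff_zero.2 (hcont.comp (continuous_id.max continuous_const))
  have hb_SN : TendstoUniformlyOn (fun t x => b (t + x * b t) / b t) (fun _ => 1) atTop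
      (Icc 0 2) := by
    refine (hSN.2 _ isCompact_Icc).congr ?_
    filter_upwards [eventually_ge_atTop 0] with t ht x hx
    have : 0 ≤ t + x * a t := by nlinarith [hx.1, hSN.1 t]
    simp [b, max_eq_left ht, max_eq_left this]
  have hb_bot : ∀ᶠ x in atBot, b x = a 0 := by
    filter_upwards [eventually_le_atBot 0] with x hx
    simp [b, max_eq_right hx]
  obtain ⟨φ₁, hφ₁_pos, hφ₁, hφ₁', hφ₁b, hφ₁_bot⟩ :=
    exists_contDiff_succ_div_tendsto_one 0 hb (fun x => hSN.1 _) hb_SN hb_bot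
  have hφ₁_SN : SelfNeglecting φ₁ :=
    selfNeglecting_of_eventuallyEq_mul (k := fun _ => 1) hφ₁_pos
      (fun x => (hφ₁.differentiable (by norm_num) x).hasDerivAt) hφ₁' tendsto_const_nhds
      (Eventually.of_forall fun x => (one_mul _).symm)
  obtain ⟨φ₂, hφ₂_pos, hφ₂, hφ₂', hφ₂φ₁, -⟩ :=
    exists_contDiff_succ_div_tendsto_one 1 (mod_cast hφ₁) hφ₁_pos (hφ₁_SN.2 _ isCompact_Icc)
      hφ₁_bot
  refine ⟨φ₂, hφ₂_pos, mod_cast hφ₂, hφ₂', ?_⟩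
  have := (hφ₁b.inv₀ one_ne_zero).mul (hφ₂φ₁.inv₀ one_ne_zero)
  rw [inv_one, mul_one] at this
  refine this.congr' ?_
  filter_upwards [eventually_ge_atTop 0] with x hx
  have := hφ₁_pos x
  simp only [b, max_eq_left hx]
  field_simp

theorem exists_contDiff_integral_eq {φ : ℝ → ℝ} (hφ : ContDiff ℝ 2 φ)
    (hφ' : Tendsto (deriv φ) atTop (𝓝 0)) :
    ∃ e : ℝ → ℝ, ContDiff ℝ 1 e ∧ Tendsto e atTop (𝓝 0) ∧
      ∀ x ≥ 1, ∫ u in (0:ℝ)..x, e u = φ x := by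
  set ψ : ℝ → ℝ := fun x => Real.smoothTransition x * φ x
  have hψ : ContDiff ℝ 2 ψ := Real.smoothTransition.contDiff.mul hφ
  refine ⟨deriv ψ, (contDiff_succ_iff_deriv.1 hψ).2.2, ?_, fun x hx => ?_⟩
  · refine hφ'.congr' ?_
    filter_upwards [eventually_gt_atTop 1] with x hx
    refine (EventuallyEq.deriv_eq ?_).symm
    filter_upwards [Ioi_mem_nhds hx] with y hy
    simp [ψ, Real.smoothTransition.one_of_one_le hy.le]
  · rw [integral_deriv_eq_sub (fun y _ => hψ.differentiable (by norm_num) y)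
      ((hψ.continuous_deriv (by norm_num)).intervalIntegrable _ _)]
    simp [ψ, Real.smoothTransition.one_of_one_le hx, Real.smoothTransition.zero_of_nonpos le_rfl]

/-- **Representation theorem for self-neglecting functions.**  A continuous
`a : ℝ → (0,∞)` is self-neglecting iff for some constant `c > 0`, some `C¹`
function `e` with `e(u) → 0` as `u → ∞`, and some `h` with `h(x) → 1` as
`x → ∞`, one has `a(x) = c · h(x) · ∫_0^x e(u) du` for all large `x`. -/
theorem selfNeglecting_representation (a : ℝ → ℝ)
    (hpos : ∀ t, 0 < a t) (hcont : Continuous a) :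
    SelfNeglecting a ↔
      ∃ c : ℝ, 0 < c ∧
        ∃ e : ℝ → ℝ, ContDiff ℝ 1 e ∧ Tendsto e atTop (𝓝 0) ∧
          ∃ h : ℝ → ℝ, Tendsto h atTop (𝓝 1) ∧
            ∀ᶠ x in atTop, a x = c * h x * ∫ u in (0:ℝ)..x, e u := by
  constructor
  · intro hSN
    obtain ⟨φ, hφ_pos, hφ, hφ', haφ⟩ := hSN.exists_contDiff_two_div_tendsto_one hcont
    obtain ⟨e, he, he0, hint⟩ := exists_contDiff_integral_eq hφ hφ'
    refine ⟨1, one_pos, e, he, he0, fun x => a x / φ x, haφ, ?_⟩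
    filter_upwards [eventually_ge_atTop 1] with x hx
    rw [hint x hx, one_mul, div_mul_cancel₀ _ (hφ_pos x).ne']
  · rintro ⟨c, -, e, he, he0, h, hh, hrep⟩
    refine selfNeglecting_of_eventuallyEq_mul (F := fun x => c * ∫ u in (0:ℝ)..x, e u)
      (f := fun x => c * e x) hpos
      (fun x => ((he.continuous.integral_hasStrictDerivAt 0 x).hasDerivAt).const_mul c)
      (by simpa using he0.const_mul c) hh ?_
    filter_upwards [hrep] with x hx
    rw [hx]
    ring
end
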